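/- arXiv:1408.6858 — 6 statements merged into one kernel-verified Lean document; each statement's English description precedes it below -/
import Mathlib

section
/- Let n, m, k be positive integers with 1 ≤ k ≤ n−1 and suppose that m divides the binomial coefficient C(n,k). Then for every subset S of [n−1], the congruence β_n(S) ≡ −β_n(S △ {k}) (mod m) holds. -/
/-- The descent set of a permutation of `Fin n`, as a subset of `[n-1] = {1,…,n-1}`
(1-based positions): `i` is a descent if `π(i) > π(i+1)`. -/
def descentSet (n : ℕ) (π : Equiv.Perm (Fin n)) : Finset ℕ :=
  (Finset.Ico 1 n).filter fun i => ∀ h : i < n, π ⟨i, h⟩ < π ⟨i - 1, by omega⟩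

/-- The descent set statistic `β_n(S)`: the number of permutations of `{1,…,n}`
with descent set `S`. -/
def beta (n : ℕ) (S : Finset ℕ) : ℕ :=
  (Finset.univ.filter fun π : Equiv.Perm (Fin n) => descentSet n π = S).card

/-- The descent set polynomial `Q_n(t) = ∑_{S ⊆ [n-1]} t^{β_n(S)}`. -/
noncomputable def Q (n : ℕ) : Polynomial ℤ :=
  ∑ S ∈ (Finset.Ico 1 n).powerset, Polynomial.X ^ beta n S

/-! Away from position `k`, a descent compares two positions that lie in the same block
`{0, …, k - 1}` or `{k, …, n - 1}`, so it only sees the relative order of the values inside each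
block. Writing `π = e_A * σ`, where `A` is the set of values in the first block, `e_A` the
`(k, n - k)`-shuffle onto `A`, and `σ` preserves the blocks, the permutations whose descent set
agrees with `S` off `k` split into `C(n, k)` classes of equal size. These permutations are exactly
those with descent set `S` or `S ∆ {k}`, so `C(n, k)` divides `β_n(S) + β_n(S ∆ {k})`. -/

open Finset Equiv

variable {n k : ℕ}

namespace Finset

theorem sdiff_singleton_eq_sdiff_singleton_iff {α : Type*} [DecidableEq α]
    {s t : Finset α} {a : α} : s \ {a} = t \ {a} ↔ s = t ∨ s = symmDiff t {a} := by
  refine ⟨fun h => ?_, by rintro (rfl | rfl) <;> ext <;> simp⟩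
  have hoff (x : α) (hx : x ≠ a) : x ∈ s ↔ x ∈ t := by simpa [hx] using Finset.ext_iff.1 h x
  by_cases ha : a ∈ s ↔ a ∈ t
  · left; ext x
    by_cases hx : x = a
    · exact hx ▸ ha
    · exact hoff x hx
  · right; ext x
    by_cases hx : x = a
    · subst hx
      simp only [mem_symmDiff, mem_singleton, not_true_eq_false, and_false, true_and, false_or]
      tauto
    · simp [mem_symmDiff, hx, hoff x hx]

/-- The `(#A, n - #A)`-shuffle onto `A`: the first `#A` positions go increasingly onto `A`,
the others increasingly onto `Aᶜ`. -/
def shuffle (A : Finset (Fin n)) (i : Fin n) : Fin n :=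
  if h : (i : ℕ) < #A then A.orderEmbOfFin rfl ⟨i, h⟩
  else Aᶜ.orderEmbOfFin rfl ⟨i - #A, by rw [card_compl, Fintype.card_fin]; omega⟩

theorem shuffle_mem_iff (A : Finset (Fin n)) (i : Fin n) : shuffle A i ∈ A ↔ (i : ℕ) < #A := by
  unfold shuffle
  split_ifs with h
  · simp [h, orderEmbOfFin_mem]
  · simpa [h] using mem_compl.1 (orderEmbOfFin_mem Aᶜ rfl _)

theorem shuffle_lt_shuffle_iff (A : Finset (Fin n)) {i j : Fin n}
    (hij : (i : ℕ) < #A ↔ (j : ℕ) < #A) : shuffle A i < shuffle A j ↔ i < j := by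
  unfold shuffle
  by_cases hi : (i : ℕ) < #A
  · simp only [hi, hij.1 hi, dite_true, OrderEmbedding.lt_iff_lt, Fin.mk_lt_mk, Fin.val_fin_lt]
  · simp only [hi, mt hij.2 hi, dite_false, OrderEmbedding.lt_iff_lt, Fin.mk_lt_mk]
    omega

theorem shuffle_injective (A : Finset (Fin n)) : Function.Injective (shuffle A) := by
  intro i j hij
  have hblock : (i : ℕ) < #A ↔ (j : ℕ) < #A := by
    rw [← shuffle_mem_iff, ← shuffle_mem_iff, hij]
  exact le_antisymm
    (not_lt.1 fun h => ((shuffle_lt_shuffle_iff A hblock.symm).2 h).ne hij.symm)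
    (not_lt.1 fun h => ((shuffle_lt_shuffle_iff A hblock).2 h).ne hij)

noncomputable def shufflePerm (A : Finset (Fin n)) : Perm (Fin n) :=
  .ofBijective _ (Finite.injective_iff_bijective.1 (shuffle_injective A))

theorem shufflePerm_apply (A : Finset (Fin n)) (i : Fin n) : shufflePerm A i = shuffle A i := rfl

end Finset

def initialValues (k : ℕ) (π : Perm (Fin n)) : Finset (Fin n) := {x | ((π⁻¹ x : Fin n) : ℕ) < k}

theorem initialValues_eq_iff {π : Perm (Fin n)} {A : Finset (Fin n)} :
    initialValues k π = A ↔ ∀ j, π j ∈ A ↔ (j : ℕ) < k := by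
  rw [Finset.ext_iff, π.symm.forall_congr_left]
  simp [initialValues, iff_comm]

theorem card_initialValues (hk : k ≤ n) (π : Perm (Fin n)) : #(initialValues k π) = k := by
  rw [initialValues, card_equiv π⁻¹ (t := {j : Fin n | (j : ℕ) < k}) (by simp),
    Fin.card_filter_val_lt, min_eq_right hk]

theorem descentSet_sdiff_eq_of_lt_iff {π π' : Perm (Fin n)}
    (h : ∀ i j : Fin n, ((i : ℕ) < k ↔ (j : ℕ) < k) → (π i < π j ↔ π' i < π' j)) :
    descentSet n π \ {k} = descentSet n π' \ {k} := by
  ext i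
  simp only [descentSet, mem_sdiff, mem_filter, mem_Ico, mem_singleton]
  constructor <;> rintro ⟨⟨hi, hdes⟩, hik⟩ <;> refine ⟨⟨hi, fun hin => ?_⟩, hik⟩
  · exact (h _ _ (by simp only; omega)).1 (hdes hin)
  · exact (h _ _ (by simp only; omega)).2 (hdes hin)

theorem initialValues_shufflePerm_mul_eq_iff {A : Finset (Fin n)} {σ : Perm (Fin n)} :
    initialValues #A (shufflePerm A * σ) = A ↔ ∀ j, ((σ j : ℕ) < #A ↔ (j : ℕ) < #A) := by
  simp only [initialValues_eq_iff, Perm.mul_apply, shufflePerm_apply, shuffle_mem_iff]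

theorem descentSet_shufflePerm_mul_sdiff {A : Finset (Fin n)} {σ : Perm (Fin n)}
    (hσ : ∀ j, ((σ j : ℕ) < #A ↔ (j : ℕ) < #A)) :
    descentSet n (shufflePerm A * σ) \ {#A} = descentSet n σ \ {#A} :=
  descentSet_sdiff_eq_of_lt_iff fun i j hij =>
    shuffle_lt_shuffle_iff A (by rw [hσ, hσ]; exact hij)

theorem card_filter_descentSet_sdiff_eq (hk : k ≤ n) (D : Finset ℕ) :
    #{π : Perm (Fin n) | descentSet n π \ {k} = D} = n.choose k *
      #{σ : Perm (Fin n) | descentSet n σ \ {k} = D ∧ ∀ j, ((σ j : ℕ) < k ↔ (j : ℕ) < k)} := by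
  rw [card_eq_sum_card_fiberwise (f := initialValues k) (t := powersetCard k univ)
      fun π _ => mem_powersetCard.2 ⟨subset_univ _, card_initialValues hk π⟩,
    sum_const_nat fun A hA => ?_, card_powersetCard, card_univ, Fintype.card_fin]
  obtain rfl := (mem_powersetCard.1 hA).2
  refine card_equiv (Equiv.mulLeft (shufflePerm A)⁻¹) fun π => ?_
  obtain ⟨σ, rfl⟩ : ∃ σ, π = shufflePerm A * σ := ⟨(shufflePerm A)⁻¹ * π, by group⟩
  simp only [mem_filter, mem_univ, true_and, coe_mulLeft, inv_mul_cancel_left,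
    initialValues_shufflePerm_mul_eq_iff]
  exact and_congr_left fun hσ => by rw [descentSet_shufflePerm_mul_sdiff hσ]

theorem beta_add_beta_symmDiff_singleton (n k : ℕ) (S : Finset ℕ) :
    beta n S + beta n (symmDiff S {k}) = #{π : Perm (Fin n) | descentSet n π \ {k} = S \ {k}} := by
  simp only [beta, sdiff_singleton_eq_sdiff_singleton_iff, filter_or]
  refine (card_union_of_disjoint (disjoint_filter.2 fun π _ hS hT => ?_)).symm
  rw [hS, eq_comm, symmDiff_eq_left] at hT
  exact singleton_ne_empty k hT

theorem beta_symmDiff_modEq_general (n m k : ℕ) (hk2 : k ≤ n - 1)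
    (hdvd : m ∣ n.choose k) (S : Finset ℕ) :
    (beta n S : ℤ) ≡ -(beta n (symmDiff S {k}) : ℤ) [ZMOD (m : ℤ)] := by
  have hsum : m ∣ beta n S + beta n (symmDiff S {k}) := by
    rw [beta_add_beta_symmDiff_singleton, card_filter_descentSet_sdiff_eq (by omega)]
    exact hdvd.mul_right _
  rw [Int.modEq_iff_dvd, ← neg_add', dvd_neg, add_comm]
  exact_mod_cast hsum

/-- MacMahon flip lemma: if `m ∣ C(n,k)` with `1 ≤ k ≤ n-1`, then
`β_n(S) ≡ -β_n(S ∆ {k}) (mod m)` for every `S ⊆ [n-1]`. -/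
theorem beta_symmDiff_modEq (n m k : ℕ) (hm : 0 < m) (hk1 : 1 ≤ k) (hk2 : k ≤ n - 1)
    (hdvd : m ∣ n.choose k) (S : Finset ℕ) (hS : S ⊆ Finset.Ico 1 n) :
    (beta n S : ℤ) ≡ -(beta n (symmDiff S {k}) : ℤ) [ZMOD (m : ℤ)] :=
  beta_symmDiff_modEq_general n m k hk2 hdvd S
end

section
/- For every subset S of [n−1], the descent set statistic β_n(S) is congruent modulo 2 to the number of subsets T = {s_1 < s_2 < ⋯ < s_k} of S whose associated composition co(T) = (s_1, s_2−s_1, …, s_k−s_{k−1}, n−s_k) of n sums to n without any carries in base 2 (equivalently, the multinomial coefficient n!/(c_1!·c_2!⋯c_{k+1}!) is odd). In other words, β_n(S) ≡ χ̃(Δ_n|_S) (mod 2), the reduced Euler characteristic of the induced subcomplex of Δ_n on S. -/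
/-- The flag `f`-vector entry of the Boolean algebra `B_n` indexed by
`T = {s₁ < s₂ < ⋯ < s_k} ⊆ [n-1]`: the multinomial coefficient
`n!/(c₁!·c₂!⋯c_{k+1}!)` of the associated composition
`co(T) = (s₁, s₂ - s₁, …, n - s_k)`, computed as the telescoping product
`C(s₂,s₁)·C(s₃,s₂)⋯C(n,s_k)`. -/
def flagF (n : ℕ) (T : Finset ℕ) : ℕ :=
  (((T.sort (· ≤ ·) ++ [n]).zip (0 :: T.sort (· ≤ ·))).map
    fun p => p.1.choose p.2).prod

/-!
Write `α_n(S)` for the number of permutations whose descent set is contained in `S`, so that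
`α_n(S) = ∑_{T ⊆ S} β_n(T)`. If `s` is the largest element of `S`, a permutation with descents in
`S` is the same as an `s`-subset `A` of values, placed on the first `s` positions in a pattern with
descents in `S \ {s}`, followed by the values of `Aᶜ` in increasing order. Hence
`α_n(S) = C(n, s) · α_s(S \ {s})`, which is the multinomial coefficient `flagF n S`. Möbius
inversion on the Boolean lattice only involves signs, which disappear modulo 2, so
`β_n(S) ≡ ∑_{T ⊆ S} flagF n T`, and this sum is congruent to the number of its odd terms.
-/

open Finset

section Descents

variable {α : Type*} [LinearOrder α]

def descents {m : ℕ} (f : Fin m → α) : Finset ℕ :=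
  (Ico 1 m).filter fun i => ∀ h : i < m, f ⟨i, h⟩ < f ⟨i - 1, by omega⟩

lemma descentSet_eq_descents (n : ℕ) (π : Equiv.Perm (Fin n)) : descentSet n π = descents π :=
  rfl

lemma descents_comp_of_strictMono {β : Type*} [LinearOrder β] {m : ℕ} {e : α → β}
    (he : StrictMono e) (f : Fin m → α) : descents (e ∘ f) = descents f := by
  simp [descents, he.lt_iff_lt]

lemma descents_eq_empty_iff {m : ℕ} {f : Fin m → α} : descents f = ∅ ↔ Monotone f := by
  refine ⟨fun h => ?_, fun hf => ?_⟩
  · cases m with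
    | zero => exact fun a => a.elim0
    | succ k =>
      refine Fin.monotone_iff_le_succ.mpr fun i => not_lt.mp fun hlt => ?_
      have : (i : ℕ) + 1 ∈ descents f := mem_filter.mpr
        ⟨mem_Ico.mpr ⟨by omega, by omega⟩, fun _ => hlt⟩
      simp [h] at this
  · refine eq_empty_of_forall_notMem fun i hi => ?_
    obtain ⟨hi, hlt⟩ := mem_filter.mp hi
    exact (hlt (mem_Ico.mp hi).2).not_ge (hf (Fin.mk_le_mk.mpr (Nat.sub_le i 1)))

lemma erase_descents_eq {s r : ℕ} (f : Fin (s + r) → α) :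
    (descents f).erase s =
      descents (f ∘ Fin.castAdd r) ∪ (descents (f ∘ Fin.natAdd s)).map (addLeftEmbedding s) := by
  ext i
  simp only [descents, mem_erase, mem_filter, mem_Ico, mem_union, mem_map, Function.comp_apply,
    addLeftEmbedding_apply, Fin.castAdd_mk, Fin.natAdd_mk]
  rcases lt_or_ge i s with hi | hi
  · have hne : ∀ a, s + a ≠ i := by omega
    simp only [hi, hne]
    grind
  · obtain ⟨a, rfl⟩ := Nat.exists_eq_add_of_le hi
    simp only [add_right_inj, exists_eq_right]
    constructor
    · rintro ⟨ha, ⟨-, hlt⟩, hd⟩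
      refine Or.inr ⟨⟨by omega, by omega⟩, fun _ => ?_⟩
      simpa [show s + a - 1 = s + (a - 1) by omega] using hd hlt
    · rintro (⟨⟨-, h⟩, -⟩ | ⟨⟨ha, hr⟩, hd⟩)
      · omega
      refine ⟨by omega, ⟨by omega, by omega⟩, fun _ => ?_⟩
      simpa [show s + a - 1 = s + (a - 1) by omega] using hd hr

lemma descents_subset_insert_iff {s r : ℕ} {T : Finset ℕ} (hT : ∀ t ∈ T, t < s)
    (f : Fin (s + r) → α) :
    descents f ⊆ insert s T ↔ descents (f ∘ Fin.castAdd r) ⊆ T ∧ Monotone (f ∘ Fin.natAdd s) := by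
  rw [subset_insert_iff, erase_descents_eq, union_subset_iff, ← descents_eq_empty_iff]
  refine and_congr_right' ⟨fun h => eq_empty_of_forall_notMem fun a ha => ?_, fun h => by simp [h]⟩
  exact absurd (hT _ (h (mem_map_of_mem _ ha))) (by simp)

end Descents

section BlockPerm

variable {s r : ℕ}

lemma card_compl_of_card_eq {A : Finset (Fin (s + r))} (hA : #A = s) : #Aᶜ = r := by
  rw [card_compl, Fintype.card_fin, hA, Nat.add_sub_cancel_left]

def blockPerm (A : Finset (Fin (s + r))) (hA : #A = s) (σ : Equiv.Perm (Fin s)) :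
    Equiv.Perm (Fin (s + r)) :=
  finSumFinEquiv.symm.trans
    ((σ.sumCongr (Equiv.refl _)).trans (finSumEquivOfFinset hA (card_compl_of_card_eq hA)))

variable (A : Finset (Fin (s + r))) (hA : #A = s) (σ : Equiv.Perm (Fin s))

@[simp]
lemma blockPerm_castAdd (i : Fin s) :
    blockPerm A hA σ (Fin.castAdd r i) = A.orderEmbOfFin hA (σ i) := by
  simp [blockPerm]

@[simp]
lemma blockPerm_natAdd (j : Fin r) :
    blockPerm A hA σ (Fin.natAdd s j) = Aᶜ.orderEmbOfFin (card_compl_of_card_eq hA) j := by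
  simp [blockPerm]

lemma descents_blockPerm_subset_insert_iff {T : Finset ℕ} (hT : ∀ t ∈ T, t < s) :
    descents (blockPerm A hA σ) ⊆ insert s T ↔ descents σ ⊆ T := by
  have hfirst : blockPerm A hA σ ∘ Fin.castAdd r = A.orderEmbOfFin hA ∘ σ := by
    ext1; simp
  have hlast : blockPerm A hA σ ∘ Fin.natAdd s = Aᶜ.orderEmbOfFin (card_compl_of_card_eq hA) := by
    ext1; simp
  rw [descents_subset_insert_iff hT, hfirst, hlast,
    descents_comp_of_strictMono (A.orderEmbOfFin hA).strictMono]
  exact and_iff_left (OrderEmbedding.monotone _)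

lemma image_blockPerm_castAdd : univ.image (fun i => blockPerm A hA σ (Fin.castAdd r i)) = A := by
  ext x
  simp only [blockPerm_castAdd, mem_image, mem_univ, true_and]
  rw [← σ.surjective.exists (p := fun i => A.orderEmbOfFin hA i = x), ← Set.mem_range,
    range_orderEmbOfFin, mem_coe]

lemma blockPerm_injective {A' : Finset (Fin (s + r))} {hA' : #A' = s} {σ' : Equiv.Perm (Fin s)}
    (h : blockPerm A hA σ = blockPerm A' hA' σ') : A = A' ∧ σ = σ' := by
  obtain rfl : A = A' := by
    rw [← image_blockPerm_castAdd A hA σ, ← image_blockPerm_castAdd A' hA' σ', h]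
  refine ⟨rfl, Equiv.ext fun i => (A.orderEmbOfFin hA).injective ?_⟩
  simpa using congr($h (Fin.castAdd r i))

lemma exists_blockPerm_eq {π : Equiv.Perm (Fin (s + r))} (hπ : Monotone (π ∘ Fin.natAdd s)) :
    ∃ A hA σ, blockPerm A hA σ = π := by
  set f := π ∘ Fin.castAdd r
  have hf : Function.Injective f := π.injective.comp (Fin.castAdd_injective s r)
  set A := univ.image f
  have hA : #A = s := by rw [card_image_of_injective _ hf, card_univ, Fintype.card_fin]
  have hsort : f ∘ Tuple.sort f = A.orderEmbOfFin hA :=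
    orderEmbOfFin_unique hA (fun i => mem_image_of_mem _ (mem_univ _))
      ((Tuple.monotone_sort f).strictMono_of_injective (hf.comp (Tuple.sort f).injective))
  have hlast : π ∘ Fin.natAdd s = Aᶜ.orderEmbOfFin (card_compl_of_card_eq hA) := by
    refine orderEmbOfFin_unique _ (fun j => mem_compl.mpr fun hj => ?_)
      (hπ.strictMono_of_injective (π.injective.comp (Fin.natAdd_injective r s)))
    obtain ⟨i, -, hi⟩ := mem_image.mp hj
    have := congr_arg Fin.val (π.injective hi)
    simp only [Fin.val_castAdd, Fin.val_natAdd] at this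
    omega
  refine ⟨A, hA, (Tuple.sort f)⁻¹, Equiv.ext (Fin.addCases (fun i => ?_) (fun j => ?_))⟩
  · rw [blockPerm_castAdd, ← hsort]
    simp [f]
  · rw [blockPerm_natAdd, ← hlast]
    rfl

end BlockPerm

lemma card_filter_descentSet_subset_insert {s r : ℕ} {T : Finset ℕ} (hT : ∀ t ∈ T, t < s) :
    #{π : Equiv.Perm (Fin (s + r)) | descentSet (s + r) π ⊆ insert s T} =
      (s + r).choose s * #{σ : Equiv.Perm (Fin s) | descentSet s σ ⊆ T} := by
  have hchoose : #(powersetCard s (univ : Finset (Fin (s + r)))) = (s + r).choose s := by simp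
  rw [← hchoose, ← card_product]
  symm
  refine card_bij (fun p hp => blockPerm p.1 (mem_powersetCard.mp (mem_product.mp hp).1).2 p.2)
    ?_ ?_ ?_
  · rintro ⟨A, σ⟩ hp
    simp only [mem_product, mem_filter, mem_univ, true_and] at hp ⊢
    exact (descents_blockPerm_subset_insert_iff A _ σ hT).mpr hp.2
  · rintro ⟨A, σ⟩ _ ⟨A', σ'⟩ _ h
    obtain ⟨rfl, rfl⟩ := blockPerm_injective A _ σ h
    rfl
  · intro π hπ
    rw [mem_filter, descentSet_eq_descents] at hπ
    obtain ⟨A, hA, σ, rfl⟩ := exists_blockPerm_eq ((descents_subset_insert_iff hT π).mp hπ.2).2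
    refine ⟨(A, σ), ?_, rfl⟩
    simp only [mem_product, mem_powersetCard, mem_filter, mem_univ, true_and, subset_univ]
    exact ⟨hA, (descents_blockPerm_subset_insert_iff A hA σ hT).mp hπ.2⟩

lemma sort_insert_of_forall_lt {s : ℕ} {T : Finset ℕ} (hT : ∀ t ∈ T, t < s) :
    (insert s T).sort (· ≤ ·) = T.sort (· ≤ ·) ++ [s] := by
  refine (sortedLT_sort _).eq_of_mem_iff ?_ fun a => by simp [or_comm]
  rw [List.sortedLT_iff_pairwise, List.pairwise_append]
  refine ⟨List.sortedLT_iff_pairwise.mp (sortedLT_sort T), by simp, ?_⟩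
  simpa using hT

lemma flagF_insert_of_forall_lt (n : ℕ) {s : ℕ} {T : Finset ℕ} (hT : ∀ t ∈ T, t < s) :
    flagF n (insert s T) = flagF s T * n.choose s := by
  rw [flagF, flagF, sort_insert_of_forall_lt hT, ← List.cons_append, List.zip_append (by simp),
    List.map_append, List.prod_append]
  simp

lemma card_filter_descentSet_subset {n : ℕ} {S : Finset ℕ} (hS : S ⊆ Ico 1 n) :
    #{π : Equiv.Perm (Fin n) | descentSet n π ⊆ S} = flagF n S := by
  induction S using Finset.induction_on_max generalizing n with
  | empty =>
    simp_rw [subset_empty, descentSet_eq_descents, descents_eq_empty_iff, Equiv.Perm.monotone_iff]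
    simp [flagF, filter_eq']
  | insert s T hT ih =>
    obtain ⟨r, rfl⟩ := Nat.exists_eq_add_of_le (mem_Ico.mp (hS (mem_insert_self s T))).2.le
    have hTs : T ⊆ Ico 1 s := fun t ht =>
      mem_Ico.mpr ⟨(mem_Ico.mp (hS (mem_insert_of_mem ht))).1, hT t ht⟩
    rw [card_filter_descentSet_subset_insert hT, flagF_insert_of_forall_lt _ hT, ih hTs, mul_comm]

lemma sum_powerset_beta (n : ℕ) (S : Finset ℕ) :
    ∑ T ∈ S.powerset, beta n T = #{π : Equiv.Perm (Fin n) | descentSet n π ⊆ S} := by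
  rw [card_eq_sum_card_fiberwise fun π hπ => mem_powerset.mpr (mem_filter.mp hπ).2]
  refine sum_congr rfl fun T hT => congr_arg card ?_
  rw [filter_filter]
  exact filter_congr fun π _ => (and_iff_right_of_imp fun h => h ▸ mem_powerset.mp hT).symm

lemma sum_powerset_sum_powerset_of_charTwo {ι R : Type*} [DecidableEq ι] [Ring R] [CharP R 2]
    (f : Finset ι → R) (S : Finset ι) : ∑ T ∈ S.powerset, ∑ U ∈ T.powerset, f U = f S := by
  calc ∑ T ∈ S.powerset, ∑ U ∈ T.powerset, f U
      = ∑ U ∈ S.powerset, ∑ _T ∈ Icc U S, f U := by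
        refine sum_comm' fun T U => ?_
        simp only [mem_powerset, mem_Icc]
        exact ⟨fun h => ⟨⟨h.2, h.1⟩, h.2.trans h.1⟩, fun h => ⟨h.1.2, h.1.1⟩⟩
    _ = ∑ U ∈ S.powerset, if U = S then f S else 0 := by
        refine sum_congr rfl fun U hU => ?_
        rw [sum_const, card_Icc_finset (mem_powerset.mp hU)]
        split_ifs with h
        · simp [h]
        · have hlt : #U < #S := card_lt_card (ssubset_of_subset_of_ne (mem_powerset.mp hU) h)
          rw [nsmul_eq_mul, Nat.cast_pow, Nat.cast_ofNat, CharTwo.two_eq_zero, zero_pow (by omega),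
            zero_mul]
    _ = f S := by simp

theorem beta_modEq_euler_general (n : ℕ) (S : Finset ℕ)
    (hS : S ⊆ Finset.Ico 1 n) :
    beta n S ≡ (S.powerset.filter fun T => Odd (flagF n T)).card [MOD 2] := by
  rw [← ZMod.natCast_eq_natCast_iff, natCast_card_filter,
    ← sum_powerset_sum_powerset_of_charTwo (fun T => (beta n T : ZMod 2))]
  refine sum_congr rfl fun T hT => ?_
  rw [← Nat.cast_sum, sum_powerset_beta,
    card_filter_descentSet_subset ((mem_powerset.mp hT).trans hS)]
  split_ifs with h
  · exact ZMod.natCast_eq_one_iff_odd.mpr h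
  · exact ZMod.natCast_eq_zero_iff_even.mpr (Nat.not_odd_iff_even.mp h)

/-- The descent set statistic `β_n(S)` is congruent modulo 2 to the number of
subsets `T ⊆ S` whose associated composition of `n` has an odd multinomial
coefficient (equivalently, sums to `n` with no carries in base 2); that is, to
the reduced Euler characteristic of the induced subcomplex `Δ_n|_S`. -/
theorem beta_modEq_euler (n : ℕ) (hn : 1 ≤ n) (S : Finset ℕ)
    (hS : S ⊆ Finset.Ico 1 n) :
    beta n S ≡ (S.powerset.filter fun T => Odd (flagF n T)).card [MOD 2] :=
  beta_modEq_euler_general n S hS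
end

section
/- Let m be an even positive integer and n a positive integer. For 0 ≤ j ≤ m−1 let a_{m,j} be the number of subsets S ⊆ [n−1] with β_n(S) ≡ j (mod m), with indices of a read modulo m. If a_{m,j} = a_{m,−j} for all integers j and a_{m,j} = a_{m, m/2 − j} for all integers j, then the cyclotomic polynomial Φ_m(t) divides the descent set polynomial Q_n(t). -/
/-- `a_{m,j}`: the number of subsets `S ⊆ [n-1]` with `β_n(S) ≡ j (mod m)`,
with the index `j` taken modulo `m`. -/
def acount (n m : ℕ) (j : ZMod m) : ℕ :=
  ((Finset.Ico 1 n).powerset.filter fun S => (beta n S : ZMod m) = j).card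

open Finset Polynomial

section RootOfUnity

variable {R : Type*} {m : ℕ} {ζ : R}

lemma IsPrimitiveRoot.pow_half_eq_neg_one [CommRing R] [NoZeroDivisors R]
    (hζ : IsPrimitiveRoot ζ m) (hm : m ≠ 0) (hme : Even m) : ζ ^ (m / 2) = -1 := by
  obtain ⟨k, rfl⟩ := hme
  have hk : k ≠ 0 := by omega
  have h2 : IsPrimitiveRoot (ζ ^ k) 2 := by
    simpa [← two_mul, hk] using hζ.pow_of_dvd hk ⟨2, by ring⟩
  rw [← two_mul, Nat.mul_div_cancel_left k two_pos]
  exact h2.eq_neg_one_of_two_right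

variable [CommSemiring R]

lemma pow_zmod_val_natCast (hζ : ζ ^ m = 1) (k : ℕ) : ζ ^ (k : ZMod m).val = ζ ^ k := by
  rw [ZMod.val_natCast, ← pow_eq_pow_mod k hζ]

lemma pow_zmod_val_add [NeZero m] (hζ : ζ ^ m = 1) (i j : ZMod m) :
    ζ ^ (i + j).val = ζ ^ i.val * ζ ^ j.val := by
  rw [ZMod.val_add, ← pow_eq_pow_mod _ hζ, pow_add]

lemma sum_pow_eq_sum_card_fiber_zmod [NeZero m] (hζ : ζ ^ m = 1) {ι : Type*} (s : Finset ι)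
    (f : ι → ℕ) :
    ∑ i ∈ s, ζ ^ f i = ∑ j : ZMod m, (#{i ∈ s | (f i : ZMod m) = j} : R) * ζ ^ j.val := by
  rw [← sum_fiberwise s (fun i => (f i : ZMod m))]
  refine sum_congr rfl fun j _ => ?_
  have hfiber : ∀ i ∈ {i ∈ s | (f i : ZMod m) = j}, ζ ^ f i = ζ ^ j.val := fun i hi => by
    rw [← (mem_filter.mp hi).2, pow_zmod_val_natCast hζ]
  rw [sum_congr rfl hfiber, sum_const, nsmul_eq_mul]

end RootOfUnity

lemma sum_mul_pow_zmod_val_eq_zero_of_add_periodic {R : Type*} [CommRing R] [NoZeroDivisors R]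
    [CharZero R] {m : ℕ} [NeZero m] {ζ : R} (hζ : ζ ^ m = 1) {c : ZMod m}
    (hc : ζ ^ c.val = -1) (a : ZMod m → R) (ha : ∀ j, a (j + c) = a j) :
    ∑ j, a j * ζ ^ j.val = 0 := by
  rw [← CharZero.eq_neg_self_iff]
  calc ∑ j, a j * ζ ^ j.val = ∑ j, a (j + c) * ζ ^ (j + c).val :=
        (Equiv.sum_comp (Equiv.addRight c) fun j => a j * ζ ^ j.val).symm
    _ = -∑ j, a j * ζ ^ j.val := by
        simp only [ha, pow_zmod_val_add hζ, hc, mul_neg, mul_one, sum_neg_distrib]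

lemma aeval_Q_eq_sum_acount {R : Type*} [CommRing R] {m : ℕ} [NeZero m] {ζ : R}
    (hζ : ζ ^ m = 1) (n : ℕ) :
    aeval ζ (Q n) = ∑ j : ZMod m, (acount n m j : R) * ζ ^ j.val := by
  simp only [Q, map_sum, map_pow, aeval_X]
  exact sum_pow_eq_sum_card_fiber_zmod hζ _ _

theorem cyclotomic_dvd_of_acount_general (m n : ℕ) (hm : 0 < m) (hme : Even m)
    (h1 : ∀ j : ZMod m, acount n m j = acount n m (-j))
    (h2 : ∀ j : ZMod m, acount n m j = acount n m (((m / 2 : ℕ) : ZMod m) - j)) :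
    Polynomial.cyclotomic m ℤ ∣ Q n := by
  have : NeZero m := ⟨hm.ne'⟩
  have hζ := Complex.isPrimitiveRoot_exp m hm.ne'
  set c : ZMod m := ((m / 2 : ℕ) : ZMod m)
  have hc : Complex.exp (2 * Real.pi * Complex.I / m) ^ c.val = -1 := by
    rw [pow_zmod_val_natCast hζ.pow_eq_one, hζ.pow_half_eq_neg_one hm.ne' hme]
  have hperiodic : ∀ j, (acount n m (j + c) : ℂ) = acount n m j := fun j => by
    rw [h1 j, h2 (-j), sub_neg_eq_add, add_comm]
  rw [cyclotomic_eq_minpoly hζ hm, ← minpoly.isIntegrallyClosed_dvd_iff (hζ.isIntegral hm),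
    aeval_Q_eq_sum_acount hζ.pow_eq_one]
  exact sum_mul_pow_zmod_val_eq_zero_of_add_periodic hζ.pow_eq_one hc _ hperiodic

/-- If `m` is even and the counts satisfy `a_{m,j} = a_{m,-j}` and
`a_{m,j} = a_{m,m/2-j}` for all `j`, then the cyclotomic polynomial `Φ_m`
divides the descent set polynomial `Q_n(t)`. -/
theorem cyclotomic_dvd_of_acount (m n : ℕ) (hm : 0 < m) (hme : Even m) (hn : 0 < n)
    (h1 : ∀ j : ZMod m, acount n m j = acount n m (-j))
    (h2 : ∀ j : ZMod m, acount n m j = acount n m (((m / 2 : ℕ) : ZMod m) - j)) :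
    Polynomial.cyclotomic m ℤ ∣ Q n :=
  cyclotomic_dvd_of_acount_general m n hm hme h1 h2
end

section
/- Let n = 2^a with a ≥ 2, and let s be an odd positive integer such that s divides the central binomial coefficient C(n, n/2) and s divides C(n, k) for some k with 1 ≤ k ≤ n−1 and k ≠ n/2. Then the cyclotomic polynomial Φ_{4s}(t) divides the descent set polynomial Q_n(t). -/
/-!
Cutting a permutation of `[n]` after position `j` into the set of its first `j` values and the
standardizations of its two blocks shows
`β_n(S) + β_n(S ∆ {j}) = C(n, j) · β_j(S ∩ [1, j)) · β_{n-j}((S ∩ (j, n)) - j)`.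
For `n = 2^b` every `C(n, j)` with `0 < j < n` is even, so every `β_{2^b}(S)` is odd.

Now let `n = 2^a`, `m = n/2`, and pair `S` with `S' = S ∆ {m, k}`, passing through `T = S ∆ {m}`.
Since `C(n, m)` is twice an odd number, `β(S) + β(T)` is an odd multiple of `2s`, while
`β(T) + β(S')` is a multiple of `C(n, k)`, hence of `4s`. So `β(S) - β(S')` is an odd multiple
of `2s`, and `t^β(S) + t^β(S')` vanishes at the primitive `4s`-th roots of unity,
where `t^(2s) = -1`.
-/

open Finset Polynomial
open scoped symmDiff

namespace Finset

variable {α : Type*} [DecidableEq α]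

lemma erase_eq_erase_iff_eq_insert_or_eq_erase {a : α} {s t : Finset α} :
    t.erase a = s.erase a ↔ t = insert a s ∨ t = s.erase a := by
  constructor
  · intro h
    by_cases ha : a ∈ t
    · left
      rw [← insert_erase ha, h]
      ext
      simp
      tauto
    · right
      rwa [← erase_eq_of_notMem ha]
  · rintro (rfl | rfl) <;> simp

lemma symmDiff_singleton_of_mem {a : α} {s : Finset α} (h : a ∈ s) :
    s ∆ {a} = s.erase a := by
  ext x
  by_cases hx : x = a <;> simp [mem_symmDiff, hx, h]

lemma symmDiff_singleton_of_notMem {a : α} {s : Finset α} (h : a ∉ s) :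
    s ∆ {a} = insert a s := by
  ext x
  by_cases hx : x = a <;> simp [mem_symmDiff, hx, h]

lemma symmDiff_pair_eq_symmDiff_symmDiff {a b : α} (hab : a ≠ b) (s : Finset α) :
    s ∆ {a, b} = s ∆ {a} ∆ {b} := by
  rw [symmDiff_assoc, (disjoint_singleton.mpr hab).symmDiff_eq_sup, sup_eq_union, ← insert_eq]

end Finset

lemma mem_descentSet_iff {n i : ℕ} (π : Equiv.Perm (Fin n)) (hi : 1 ≤ i) (hin : i < n) :
    i ∈ descentSet n π ↔ π ⟨i, hin⟩ < π ⟨i - 1, by omega⟩ := by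
  simp [descentSet, hi, hin]

lemma descentSet_subset_Ico {n : ℕ} (π : Equiv.Perm (Fin n)) : descentSet n π ⊆ Ico 1 n :=
  filter_subset _ _

lemma descentSet_eq_empty_iff {n : ℕ} (π : Equiv.Perm (Fin n)) :
    descentSet n π = ∅ ↔ π = 1 := by
  constructor
  · intro h
    rcases n with _ | n
    · exact Subsingleton.elim _ _
    have hmono : StrictMono π := by
      refine Fin.strictMono_iff_lt_succ.mpr fun i => ?_
      have hi : (i : ℕ) + 1 ∉ descentSet (n + 1) π := by simp [h]
      rw [mem_descentSet_iff π (by omega) (by omega), not_lt] at hi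
      exact lt_of_le_of_ne hi (π.injective.ne (Fin.castSucc_lt_succ (i := i)).ne)
    exact Equiv.ext (congrFun hmono.eq_id)
  · rintro rfl
    ext i
    simp [descentSet, Fin.lt_def]

lemma beta_empty (n : ℕ) : beta n ∅ = 1 := by
  simp [beta, descentSet_eq_empty_iff, filter_eq']

def lowerPart (m : ℕ) (S : Finset ℕ) : Finset ℕ := S.filter (· < m)

def upperPart (m : ℕ) (S : Finset ℕ) : Finset ℕ := (S.filter (m < ·)).image (· - m)

@[simp]
lemma mem_lowerPart {m j : ℕ} {S : Finset ℕ} : j ∈ lowerPart m S ↔ j < m ∧ j ∈ S := by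
  simp [lowerPart, and_comm]

@[simp]
lemma mem_upperPart {m j : ℕ} {S : Finset ℕ} :
    j ∈ upperPart m S ↔ 0 < j ∧ m + j ∈ S := by
  simp only [upperPart, mem_image, mem_filter]
  constructor
  · rintro ⟨i, ⟨hi, hmi⟩, rfl⟩
    exact ⟨by omega, by rwa [Nat.add_sub_cancel' hmi.le]⟩
  · rintro ⟨hj, hmj⟩
    exact ⟨m + j, ⟨hmj, by omega⟩, by omega⟩

lemma erase_eq_erase_iff_lowerPart_eq_and_upperPart_eq {m : ℕ} {S T : Finset ℕ} :
    T.erase m = S.erase m ↔ lowerPart m T = lowerPart m S ∧ upperPart m T = upperPart m S := by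
  simp only [Finset.ext_iff, mem_erase, mem_lowerPart, mem_upperPart]
  constructor
  · intro h
    exact ⟨fun j => and_congr_right fun hj => by simpa [hj.ne] using h j,
      fun j => and_congr_right fun hj => by simpa [hj.ne'] using h (m + j)⟩
  · rintro ⟨hlow, hup⟩ x
    rcases lt_trichotomy x m with hx | rfl | hx
    · simpa [hx, hx.ne] using hlow x
    · simp
    · simpa [hx.ne', hx, Nat.add_sub_cancel' hx.le] using hup (x - m)

lemma lowerPart_subset_Ico {m n : ℕ} {S : Finset ℕ} (hS : S ⊆ Ico 1 n) :
    lowerPart m S ⊆ Ico 1 m := by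
  intro j hj
  rw [mem_lowerPart] at hj
  have := mem_Ico.mp (hS hj.2)
  exact mem_Ico.mpr ⟨this.1, hj.1⟩

lemma upperPart_subset_Ico {m n : ℕ} {S : Finset ℕ} (hS : S ⊆ Ico 1 n) :
    upperPart m S ⊆ Ico 1 (n - m) := by
  intro j hj
  rw [mem_upperPart] at hj
  have := mem_Ico.mp (hS hj.2)
  exact mem_Ico.mpr ⟨hj.1, by omega⟩

section Assemble

variable {m l : ℕ} (A : {A : Finset (Fin (m + l)) // #A = m}) (σ : Equiv.Perm (Fin m))
  (τ : Equiv.Perm (Fin l))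

lemma card_compl_of_card_eq_s3 {s : Finset (Fin (m + l))} (hs : #s = m) : #sᶜ = l := by
  rw [card_compl, Fintype.card_fin, hs, Nat.add_sub_cancel_left]

def assembleFun (i : Fin (m + l)) : Fin (m + l) :=
  if h : (i : ℕ) < m then A.1.orderEmbOfFin A.2 (σ ⟨i, h⟩)
  else A.1ᶜ.orderEmbOfFin (card_compl_of_card_eq_s3 A.2) (τ ⟨i - m, by omega⟩)

lemma assembleFun_of_lt {i : ℕ} (hi : i < m) :
    assembleFun A σ τ ⟨i, by omega⟩ = A.1.orderEmbOfFin A.2 (σ ⟨i, hi⟩) :=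
  dif_pos hi

lemma assembleFun_add {j : ℕ} (hj : j < l) :
    assembleFun A σ τ ⟨m + j, by omega⟩
      = A.1ᶜ.orderEmbOfFin (card_compl_of_card_eq_s3 A.2) (τ ⟨j, hj⟩) := by
  rw [assembleFun, dif_neg (by simp)]
  simp

lemma assembleFun_mem_iff (i : Fin (m + l)) : assembleFun A σ τ i ∈ A.1 ↔ (i : ℕ) < m := by
  unfold assembleFun
  split_ifs with h
  · simp [h]
  · simpa [h] using mem_compl.mp (orderEmbOfFin_mem A.1ᶜ (card_compl_of_card_eq_s3 A.2) _)

lemma assembleFun_injective : Function.Injective (assembleFun A σ τ) := by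
  intro i j hij
  have hij' := (assembleFun_mem_iff A σ τ i).symm.trans (hij ▸ assembleFun_mem_iff A σ τ j)
  unfold assembleFun at hij
  split_ifs at hij with hi hj hj
  · simpa [Fin.ext_iff] using hij
  · exact absurd (hij'.mp hi) hj
  · exact absurd (hij'.mpr hj) hi
  · simp [Fin.ext_iff] at hij
    omega

noncomputable def assemble : Equiv.Perm (Fin (m + l)) :=
  Equiv.ofBijective _ (Finite.injective_iff_bijective.mp (assembleFun_injective A σ τ))

lemma assemble_apply (i : Fin (m + l)) : assemble A σ τ i = assembleFun A σ τ i :=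
  rfl

lemma assemble_symm_lt_iff (x : Fin (m + l)) :
    ((assemble A σ τ).symm x : ℕ) < m ↔ x ∈ A.1 := by
  rw [← assembleFun_mem_iff A σ τ, ← assemble_apply, Equiv.apply_symm_apply]

lemma assemble_bijective :
    Function.Bijective fun t : {A : Finset (Fin (m + l)) // #A = m} × Equiv.Perm (Fin m) ×
      Equiv.Perm (Fin l) => assemble t.1 t.2.1 t.2.2 := by
  refine (Fintype.bijective_iff_injective_and_card _).mpr ⟨?_, ?_⟩
  · rintro ⟨A, σ, τ⟩ ⟨A', σ', τ'⟩ h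
    simp only at h
    obtain rfl : A = A' := Subtype.ext <| Finset.ext fun x => by
      rw [← assemble_symm_lt_iff A σ τ, ← assemble_symm_lt_iff A' σ' τ', h]
    obtain rfl : σ = σ' := Equiv.ext fun i => by
      have := congrArg (fun π => π ⟨i, by omega⟩) h
      simpa [assemble_apply, assembleFun_of_lt A _ _ i.2, Fin.ext_iff] using this
    obtain rfl : τ = τ' := Equiv.ext fun j => by
      have := congrArg (fun π => π ⟨m + j, by omega⟩) h
      simpa [assemble_apply, assembleFun_add A _ _ j.2, Fin.ext_iff] using this
    rfl
  · simp only [Fintype.card_prod, Fintype.card_finset_len, Fintype.card_perm, Fintype.card_fin]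
    rw [← mul_assoc, Nat.choose_symm_add, Nat.add_choose_mul_factorial_mul_factorial]

lemma lowerPart_descentSet_assemble :
    lowerPart m (descentSet (m + l) (assemble A σ τ)) = descentSet m σ := by
  ext i
  rw [mem_lowerPart]
  by_cases hi : 1 ≤ i ∧ i < m
  · rw [mem_descentSet_iff _ hi.1 (by omega), mem_descentSet_iff _ hi.1 hi.2, assemble_apply,
      assemble_apply, assembleFun_of_lt A σ τ hi.2, assembleFun_of_lt A σ τ (by omega),
      OrderEmbedding.lt_iff_lt]
    exact and_iff_right hi.2
  · constructor
    · rintro ⟨him, h⟩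
      exact absurd ⟨(mem_Ico.mp (descentSet_subset_Ico _ h)).1, him⟩ hi
    · intro h
      exact absurd (mem_Ico.mp (descentSet_subset_Ico _ h)) hi

lemma upperPart_descentSet_assemble :
    upperPart m (descentSet (m + l) (assemble A σ τ)) = descentSet l τ := by
  ext j
  rw [mem_upperPart]
  by_cases hj : 1 ≤ j ∧ j < l
  · have e : (⟨m + j - 1, by omega⟩ : Fin (m + l)) = ⟨m + (j - 1), by omega⟩ :=
      Fin.ext (by simp; omega)
    rw [mem_descentSet_iff _ (by omega) (by omega), mem_descentSet_iff _ hj.1 hj.2, e,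
      assemble_apply, assemble_apply, assembleFun_add A σ τ hj.2,
      assembleFun_add A σ τ (by omega), OrderEmbedding.lt_iff_lt]
    exact and_iff_right hj.1
  · constructor
    · rintro ⟨hj0, h⟩
      have := mem_Ico.mp (descentSet_subset_Ico _ h)
      omega
    · intro h
      exact absurd (mem_Ico.mp (descentSet_subset_Ico _ h)) hj

end Assemble

theorem beta_insert_add_beta_erase (m l : ℕ) (S : Finset ℕ) :
    beta (m + l) (insert m S) + beta (m + l) (S.erase m)
      = (m + l).choose m * (beta m (lowerPart m S) * beta l (upperPart m S)) := by
  have hdisj : Disjoint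
      (univ.filter fun π : Equiv.Perm (Fin (m + l)) => descentSet (m + l) π = insert m S)
      (univ.filter fun π => descentSet (m + l) π = S.erase m) :=
    disjoint_filter.mpr fun π _ h1 h2 => by
      have hm : m ∈ descentSet (m + l) π := h1 ▸ mem_insert_self m S
      simp [h2] at hm
  calc beta (m + l) (insert m S) + beta (m + l) (S.erase m)
      = #{π : Equiv.Perm (Fin (m + l)) | (descentSet (m + l) π).erase m = S.erase m} := by
        simp only [beta, ← card_union_of_disjoint hdisj, ← filter_or,
          erase_eq_erase_iff_eq_insert_or_eq_erase]
    _ = #((univ : Finset {A : Finset (Fin (m + l)) // #A = m}) ×ˢ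
          ((univ.filter fun σ => descentSet m σ = lowerPart m S) ×ˢ
            (univ.filter fun τ => descentSet l τ = upperPart m S))) := by
        refine (card_bijective _ assemble_bijective fun t => ?_).symm
        simp [erase_eq_erase_iff_lowerPart_eq_and_upperPart_eq, lowerPart_descentSet_assemble,
          upperPart_descentSet_assemble]
    _ = (m + l).choose m * (beta m (lowerPart m S) * beta l (upperPart m S)) := by
        rw [card_product, card_product, card_univ, Fintype.card_finset_len, Fintype.card_fin]
        rfl

lemma beta_add_beta_symmDiff_singleton_s3 {n j : ℕ} (hjn : j ≤ n) (S : Finset ℕ) :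
    beta n S + beta n (S ∆ {j})
      = n.choose j * (beta j (lowerPart j S) * beta (n - j) (upperPart j S)) := by
  obtain ⟨l, rfl⟩ := Nat.exists_eq_add_of_le hjn
  rw [Nat.add_sub_cancel_left, ← beta_insert_add_beta_erase]
  by_cases hj : j ∈ S
  · rw [insert_eq_of_mem hj, symmDiff_singleton_of_mem hj]
  · rw [erase_eq_of_notMem hj, symmDiff_singleton_of_notMem hj, add_comm]

theorem odd_beta_two_pow (b : ℕ) {S : Finset ℕ} (hS : S ⊆ Ico 1 (2 ^ b)) :
    Odd (beta (2 ^ b) S) := by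
  induction S using Finset.induction_on with
  | empty => simp [beta_empty]
  | insert j T hjT ih =>
    have hj := mem_Ico.mp (hS (mem_insert_self j T))
    have hsum := beta_add_beta_symmDiff_singleton_s3 hj.2.le T
    rw [symmDiff_singleton_of_notMem hjT] at hsum
    have heven : Even (beta (2 ^ b) T + beta (2 ^ b) (insert j T)) :=
      hsum ▸ (even_iff_two_dvd.mpr
        (Nat.prime_two.dvd_choose_pow (by omega) hj.2.ne)).mul_right _
    exact (Nat.even_add'.mp heven).mp (ih ((subset_insert j T).trans hS))

lemma padicValNat_choose_prime_pow_add_padicValNat {p a k : ℕ} [hp : Fact p.Prime] (hk0 : k ≠ 0)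
    (hk : k ≤ p ^ a) : padicValNat p ((p ^ a).choose k) + padicValNat p k = a := by
  have h := hp.out.emultiplicity_choose_prime_pow_add_emultiplicity hk hk0
  rw [← padicValNat_eq_emultiplicity (Nat.choose_pos hk).ne',
    ← padicValNat_eq_emultiplicity hk0] at h
  exact_mod_cast h

lemma exists_odd_choose_two_pow_succ_two_pow (b : ℕ) :
    ∃ D, Odd D ∧ (2 ^ (b + 1)).choose (2 ^ b) = 2 * D := by
  have hle : 2 ^ b ≤ 2 ^ (b + 1) := Nat.pow_le_pow_right two_pos b.le_succ
  have hC : (2 ^ (b + 1)).choose (2 ^ b) ≠ 0 := (Nat.choose_pos hle).ne'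
  have hv : padicValNat 2 ((2 ^ (b + 1)).choose (2 ^ b)) = 1 := by
    have := padicValNat_choose_prime_pow_add_padicValNat (p := 2) (a := b + 1) (k := 2 ^ b)
      (by positivity) hle
    rw [padicValNat.prime_pow] at this
    omega
  obtain ⟨D, hD⟩ : 2 ∣ (2 ^ (b + 1)).choose (2 ^ b) := by
    simpa using (padicValNat_dvd_iff_le (p := 2) (n := 1) hC).mpr hv.ge
  refine ⟨D, Nat.not_even_iff_odd.mp ?_, hD⟩
  rintro ⟨E, rfl⟩
  have h4 : 2 ^ 2 ∣ (2 ^ (b + 1)).choose (2 ^ b) := ⟨E, by rw [hD]; ring⟩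
  have := (padicValNat_dvd_iff_le hC).mp h4
  omega

lemma four_dvd_choose_two_pow_succ {b k : ℕ} (hk0 : k ≠ 0) (hk : k < 2 ^ (b + 1))
    (hkb : k ≠ 2 ^ b) : 4 ∣ (2 ^ (b + 1)).choose k := by
  have hv := padicValNat_choose_prime_pow_add_padicValNat (p := 2) hk0 hk.le
  have hvk : padicValNat 2 k < b := by
    by_contra! h
    have hdvd : 2 ^ b ∣ k := (pow_dvd_pow 2 h).trans pow_padicValNat_dvd
    exact hkb (Nat.eq_of_dvd_of_lt_two_mul hk0 hdvd (by rwa [← pow_succ']))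
  simpa using (padicValNat_dvd_iff_le (p := 2) (n := 2) (Nat.choose_pos hk.le).ne').mpr (by omega)

lemma dvd_sum_of_involution {ι R : Type*} [CommRing R] {p : R} {s : Finset ι} {f : ι → R}
    (g : ι → ι) (hdvd : ∀ i ∈ s, p ∣ f i + f (g i)) (hg_ne : ∀ i ∈ s, g i ≠ i)
    (hg_mem : ∀ i ∈ s, g i ∈ s) (hg_inv : ∀ i ∈ s, g (g i) = i) :
    p ∣ ∑ i ∈ s, f i := by
  rw [← Ideal.mem_span_singleton, ← Ideal.Quotient.eq_zero_iff_mem, map_sum]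
  refine sum_involution (fun i _ => g i) (fun i hi => ?_) (fun i hi _ => hg_ne i hi) hg_mem
    hg_inv
  rw [← map_add, Ideal.Quotient.eq_zero_iff_mem, Ideal.mem_span_singleton]
  exact hdvd i hi

section Cyclotomic

variable {R : Type*} [CommRing R]

lemma cyclotomic_four_mul_dvd_X_pow_two_mul_add_one [IsDomain R] {s : ℕ} (hs : 0 < s) :
    cyclotomic (4 * s) R ∣ X ^ (2 * s) + 1 := by
  have h := X_pow_sub_one_mul_cyclotomic_dvd_X_pow_sub_one_of_dvd R (d := 2 * s) (n := 4 * s)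
    (Nat.mem_properDivisors.mpr ⟨⟨2, by ring⟩, by omega⟩)
  have hne : (X : R[X]) ^ (2 * s) - 1 ≠ 0 := by
    simpa using X_pow_sub_C_ne_zero (R := R) (by omega) 1
  rw [show (X : R[X]) ^ (4 * s) - 1 = (X ^ (2 * s) - 1) * (X ^ (2 * s) + 1) by ring] at h
  exact (mul_dvd_mul_iff_left hne).mp h

lemma isCoprime_cyclotomic_X {n : ℕ} (hn : 1 < n) : IsCoprime (cyclotomic n R) X := by
  obtain ⟨q, hq⟩ := X_dvd_sub_C (p := cyclotomic n R)
  rw [cyclotomic_coeff_zero R hn, C_1] at hq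
  exact ⟨1, -q, by linear_combination hq⟩

lemma cyclotomic_four_mul_dvd_X_pow_add_X_pow [IsDomain R] {s b c d u v : ℕ} (hs : 0 < s)
    (hu : Odd u) (hbc : b + c = 2 * s * u) (hcd : c + d = 4 * s * v) :
    cyclotomic (4 * s) R ∣ X ^ b + X ^ d := by
  have hodd : cyclotomic (4 * s) R ∣ X ^ (b + c) + 1 := by
    rw [hbc, pow_mul]
    simpa using (cyclotomic_four_mul_dvd_X_pow_two_mul_add_one hs).trans
      (hu.add_dvd_pow_add_pow (X ^ (2 * s)) 1)
  have heven : cyclotomic (4 * s) R ∣ X ^ (c + d) - 1 := by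
    rw [hcd, pow_mul]
    simpa using (cyclotomic.dvd_X_pow_sub_one (4 * s) R).trans
      (sub_dvd_pow_sub_pow (X ^ (4 * s)) 1 v)
  refine ((isCoprime_cyclotomic_X (by omega)).pow_right (n := c)).dvd_of_dvd_mul_right ?_
  rw [show (X ^ b + X ^ d) * X ^ c = (X ^ (b + c) + 1 : R[X]) + (X ^ (c + d) - 1) by ring]
  exact dvd_add hodd heven

end Cyclotomic

lemma exists_odd_beta_add_beta_symmDiff_two_pow {b s : ℕ} (hs : Odd s)
    (hsC : s ∣ (2 ^ (b + 1)).choose (2 ^ b)) {S : Finset ℕ} (hS : S ⊆ Ico 1 (2 ^ (b + 1))) :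
    ∃ u, Odd u ∧ beta (2 ^ (b + 1)) S + beta (2 ^ (b + 1)) (S ∆ {2 ^ b}) = 2 * s * u := by
  have hhalf : 2 ^ (b + 1) - 2 ^ b = 2 ^ b := by rw [pow_succ]; omega
  obtain ⟨D, hD, hC⟩ := exists_odd_choose_two_pow_succ_two_pow b
  obtain ⟨e, rfl⟩ : s ∣ D := (Nat.coprime_two_right.mpr hs).dvd_of_dvd_mul_left (hC ▸ hsC)
  have hlow := odd_beta_two_pow b (lowerPart_subset_Ico (m := 2 ^ b) hS)
  have hup := odd_beta_two_pow b (hhalf ▸ upperPart_subset_Ico (m := 2 ^ b) hS)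
  refine ⟨e * (beta (2 ^ b) (lowerPart (2 ^ b) S) * beta (2 ^ b) (upperPart (2 ^ b) S)),
    (Nat.odd_mul.mp hD).2.mul (hlow.mul hup), ?_⟩
  rw [beta_add_beta_symmDiff_singleton_s3 (Nat.pow_le_pow_right two_pos b.le_succ), hC, hhalf]
  ring

/-- For `n = 2^a` with `a ≥ 2` and `s` an odd positive integer dividing the
central binomial coefficient `C(n, n/2)` as well as `C(n, k)` for some
`1 ≤ k ≤ n-1` with `k ≠ n/2`, the cyclotomic polynomial `Φ_{4s}` divides the
descent set polynomial `Q_n(t)`. -/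
theorem cyclotomic_four_s_dvd (a s k : ℕ) (ha : 2 ≤ a) (hs : 0 < s) (hsodd : Odd s)
    (hcentral : s ∣ (2 ^ a).choose (2 ^ a / 2))
    (hk1 : 1 ≤ k) (hk2 : k ≤ 2 ^ a - 1) (hkne : k ≠ 2 ^ a / 2)
    (hk : s ∣ (2 ^ a).choose k) :
    Polynomial.cyclotomic (4 * s) ℤ ∣ Q (2 ^ a) := by
  obtain ⟨b, rfl⟩ : ∃ b, a = b + 1 := ⟨a - 1, by omega⟩
  have hhalf : 2 ^ (b + 1) / 2 = 2 ^ b := by rw [pow_succ, Nat.mul_div_cancel _ two_pos]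
  rw [hhalf] at hcentral hkne
  have hmn : 2 ^ b < 2 ^ (b + 1) := Nat.pow_lt_pow_right one_lt_two b.lt_succ_self
  have h4s : 4 * s ∣ (2 ^ (b + 1)).choose k :=
    Nat.Coprime.mul_dvd_of_dvd_of_dvd (Nat.Coprime.pow_left 2 (Nat.coprime_two_left.mpr hsodd))
      (four_dvd_choose_two_pow_succ (by omega) (by omega) hkne) hk
  unfold Q
  refine dvd_sum_of_involution (fun S => S ∆ {2 ^ b, k}) (fun S hS => ?_) (fun S _ => ?_)
    (fun S hS => ?_) (fun S _ => by simp)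
  · rw [mem_powerset] at hS
    obtain ⟨u, hu, hsum⟩ := exists_odd_beta_add_beta_symmDiff_two_pow hsodd hcentral hS
    obtain ⟨v, hv⟩ := h4s.mul_right
      (beta k (lowerPart k (S ∆ {2 ^ b})) * beta (2 ^ (b + 1) - k) (upperPart k (S ∆ {2 ^ b})))
    rw [← beta_add_beta_symmDiff_singleton_s3 (by omega)] at hv
    rw [symmDiff_pair_eq_symmDiff_symmDiff hkne.symm]
    exact cyclotomic_four_mul_dvd_X_pow_add_X_pow hs hu hsum hv
  · simp [symmDiff_eq_left]
  · rw [mem_powerset] at hS ⊢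
    exact symmDiff_subset_union.trans (union_subset hS (insert_subset (by simp; omega)
      (singleton_subset_iff.mpr (by simp; omega))))
end

section
/- For every subset R of the interval [3,8] = {3,4,5,6,7,8}, the descent set statistics in 𝔖_{11} satisfy: β_{11}(R ∪ {1,9}) ≡ β_{11}(R ∪ {2,10}) ≡ (−1)^{|R|} (mod 3) and β_{11}(R ∪ {1,10}) ≡ β_{11}(R ∪ {2,9}) ≡ −(−1)^{|R|} (mod 3). In particular, all of these values are nonzero modulo 3. -/
/-!
Write `α_n(S) = #{π | Des π ⊆ S} = ∑_{T ⊆ S} β_n(T)`. Positions in `S` cut `[n]` into blocks,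
and every left coset of the Young subgroup `H_S` permuting positions inside blocks contains exactly
one permutation increasing on each block, i.e. with descents only in `S`. Hence
`α_n(S) = [𝔖_n : H_S] = n! / ∏ (block size)!`, and `α_n(U) ∣ α_n(T)` for `U ⊆ T` because
`H_T ≤ H_U`. As `3 ∣ α₁₁({m}) = C(11, m)` for `3 ≤ m ≤ 8`, every `α₁₁(T)` with `T` meeting `R`
vanishes mod 3, so Möbius inversion `β_n(S) = ∑_{T ⊆ S} (-1)^{|S \ T|} α_n(T)` gives
`β₁₁(R ∪ P) ≡ (-1)^{|R|} β₁₁(P) (mod 3)` for `P ⊆ {1, 2, 9, 10}`. The remaining four values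
`β₁₁(P)` come out of the multinomial formula.
-/

open Finset
open scoped Nat

namespace Finset

variable {α R : Type*} [DecidableEq α] [CommRing R]

theorem moebius_inversion_powerset (f : Finset α → R) (S : Finset α) :
    ∑ T ∈ S.powerset, (-1) ^ #(S \ T) * ∑ U ∈ T.powerset, f U = f S := by
  induction S using Finset.induction_on generalizing f with
  | empty => simp
  | insert a S ha ih =>
    rw [sum_powerset_insert ha, ← ih (fun U => f (insert a U)), ← sum_add_distrib]
    refine sum_congr rfl fun T hT => ?_
    have haT : a ∉ T := fun h => ha (mem_powerset.1 hT h)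
    rw [insert_sdiff_of_notMem _ haT, card_insert_of_notMem (by simp [ha]),
      insert_sdiff_insert, sdiff_insert_of_notMem ha, sum_powerset_insert haT]
    ring

end Finset

-- As in `descentSet`, `s ∈ S` separates the 0-based positions `s - 1` and `s`.
def blockIndex (n : ℕ) (S : Finset ℕ) (i : Fin n) : ℕ := #{s ∈ S | s ≤ (i : ℕ)}

def blockStabilizer (n : ℕ) (S : Finset ℕ) : Subgroup (Equiv.Perm (Fin n)) where
  carrier := {w | blockIndex n S ∘ w = blockIndex n S}
  one_mem' := rfl
  mul_mem' {v w} hv hw := by simp_all [Equiv.Perm.coe_mul, ← Function.comp_assoc]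
  inv_mem' {w} hw := funext fun i => by simpa using (congrFun hw (w⁻¹ i)).symm

def alpha (n : ℕ) (S : Finset ℕ) : ℕ := #{π : Equiv.Perm (Fin n) | descentSet n π ⊆ S}

def descentKey (n : ℕ) (S : Finset ℕ) (π : Equiv.Perm (Fin n)) (i : Fin n) : ℕ ×ₗ Fin n :=
  toLex (blockIndex n S i, π i)

section Blocks

variable {n : ℕ} {S : Finset ℕ}

lemma blockIndex_mono : Monotone (blockIndex n S) := fun _ _ hij =>
  card_le_card (monotone_filter_right S fun _ _ hs => hs.trans hij)

lemma blockIndex_eq_blockIndex_iff {i j : Fin n} (hij : i ≤ j) :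
    blockIndex n S i = blockIndex n S j ↔ ∀ s ∈ S, s ≤ j → s ≤ i := by
  have hsub : {s ∈ S | s ≤ (i : ℕ)} ⊆ {s ∈ S | s ≤ (j : ℕ)} :=
    monotone_filter_right S fun _ _ hs => hs.trans hij
  rw [blockIndex, blockIndex, le_antisymm_iff, and_iff_right (card_le_card hsub),
    eq_iff_card_le_of_subset hsub, Subset.antisymm_iff, and_iff_right hsub]
  simp +contextual [subset_iff]

lemma blockIndex_eq_blockIndex_of_subset {T : Finset ℕ} (hST : S ⊆ T) {i j : Fin n}
    (h : blockIndex n T i = blockIndex n T j) : blockIndex n S i = blockIndex n S j := by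
  rcases le_total i j with hij | hji
  · rw [blockIndex_eq_blockIndex_iff hij] at h ⊢
    exact fun s hs => h s (hST hs)
  · rw [eq_comm, blockIndex_eq_blockIndex_iff hji] at h ⊢
    exact fun s hs => h s (hST hs)

lemma blockIndex_castSucc_lt_succ_iff (i : Fin n) :
    blockIndex (n + 1) S i.castSucc < blockIndex (n + 1) S i.succ ↔ (i : ℕ) + 1 ∈ S := by
  rw [(blockIndex_mono (Fin.castSucc_le_succ i)).lt_iff_ne, Ne,
    blockIndex_eq_blockIndex_iff (Fin.castSucc_le_succ i)]
  simp only [Fin.val_castSucc, Fin.val_succ, not_forall]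
  constructor
  · rintro ⟨s, hs, hs1, hs2⟩
    rwa [show s = i + 1 by omega] at hs
  · exact fun h => ⟨_, h, le_rfl, by omega⟩

lemma blockStabilizer_anti {T : Finset ℕ} (hST : S ⊆ T) :
    blockStabilizer n T ≤ blockStabilizer n S := fun _ hw =>
  funext fun i => blockIndex_eq_blockIndex_of_subset hST (congrFun hw i)

end Blocks


section Descents

variable {n : ℕ} {S : Finset ℕ}

lemma add_one_mem_descentSet_iff (π : Equiv.Perm (Fin (n + 1))) (i : Fin n) :
    (i : ℕ) + 1 ∈ descentSet (n + 1) π ↔ π i.succ < π i.castSucc := by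
  simp [descentSet, Fin.succ, Fin.castSucc, Fin.castAdd, Fin.castLE]

lemma descentSet_subset_iff_strictMono {π : Equiv.Perm (Fin n)} :
    descentSet n π ⊆ S ↔ StrictMono (descentKey n S π) := by
  rcases n with _ | n
  · simp [descentSet, Subsingleton.strictMono]
  have hstep (i : Fin n) : descentKey (n + 1) S π i.castSucc < descentKey (n + 1) S π i.succ ↔
      ((i : ℕ) + 1 ∈ descentSet (n + 1) π → (i : ℕ) + 1 ∈ S) := by
    have hle := blockIndex_mono (S := S) (Fin.castSucc_le_succ i)
    rw [descentKey, descentKey, Prod.Lex.toLex_lt_toLex', add_one_mem_descentSet_iff,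
      ← blockIndex_castSucc_lt_succ_iff (S := S), hle.lt_iff_ne]
    rcases (π.injective.ne (Fin.castSucc_lt_succ (i := i)).ne).lt_or_gt with h | h
    · simp [hle, h, h.not_gt]
    · simp [hle, h, h.not_gt]
  rw [Fin.strictMono_iff_lt_succ]
  simp only [hstep]
  refine ⟨fun h i hi => h hi, fun h k hk => ?_⟩
  have hk' := (mem_filter.1 hk).1
  rw [mem_Ico] at hk'
  obtain ⟨i, rfl⟩ : ∃ i : Fin n, (i : ℕ) + 1 = k := ⟨⟨k - 1, by omega⟩, by simp; omega⟩
  exact h i hk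

lemma descentKey_injective (π : Equiv.Perm (Fin n)) : Function.Injective (descentKey n S π) :=
  fun _ _ h => π.injective (congrArg (fun x => (ofLex x).2) h)

lemma descentKey_mul {π w : Equiv.Perm (Fin n)} (hw : w ∈ blockStabilizer n S) :
    descentKey n S (π * w) = descentKey n S π ∘ w :=
  funext fun i => by simp [descentKey, ← congrFun hw i]

lemma exists_mem_blockStabilizer_descentSet_mul_subset (σ : Equiv.Perm (Fin n)) :
    ∃ w ∈ blockStabilizer n S, descentSet n (σ * w) ⊆ S := by
  set w := Tuple.sort (descentKey n S σ)
  have hsorted : StrictMono (descentKey n S σ ∘ w) :=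
    (Tuple.monotone_sort _).strictMono_of_injective ((descentKey_injective σ).comp w.injective)
  have hw : w ∈ blockStabilizer n S := by
    have hmono : Monotone (blockIndex n S ∘ w) := fun i j hij =>
      (Prod.Lex.toLex_le_toLex'.1 (hsorted.monotone hij)).1
    change blockIndex n S ∘ w = blockIndex n S
    rw [Tuple.comp_sort_eq_comp_iff_monotone.2 hmono, ← Tuple.comp_sort_eq_comp_iff_monotone.2
      (show Monotone (blockIndex n S ∘ Equiv.refl _) from blockIndex_mono)]
    rfl
  exact ⟨w, hw, descentSet_subset_iff_strictMono.2 (by rwa [descentKey_mul hw])⟩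

lemma eq_one_of_descentSet_subset {π w : Equiv.Perm (Fin n)} (hw : w ∈ blockStabilizer n S)
    (hπ : descentSet n π ⊆ S) (hπw : descentSet n (π * w) ⊆ S) : w = 1 := by
  rw [descentSet_subset_iff_strictMono] at hπ hπw
  rw [descentKey_mul hw] at hπw
  have h := (hπw.range_inj hπ).1 (w.surjective.range_comp _)
  exact Equiv.ext fun i => descentKey_injective π (congrFun h i)

end Descents

section Alpha

variable {n : ℕ} {S T : Finset ℕ}

lemma alpha_eq_index : alpha n S = (blockStabilizer n S).index := by
  rw [alpha, ← Fintype.card_subtype, ← Nat.card_eq_fintype_card, Subgroup.index]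
  refine Nat.card_eq_of_bijective (fun π => (π.1 : Equiv.Perm (Fin n) ⧸ blockStabilizer n S))
    ⟨fun ⟨π, hπ⟩ ⟨τ, hτ⟩ h => ?_, fun q => ?_⟩
  · have hw := QuotientGroup.eq.1 h
    have := eq_one_of_descentSet_subset hw hπ (by rwa [mul_inv_cancel_left])
    exact Subtype.ext (inv_mul_eq_one.1 this)
  · obtain ⟨σ, rfl⟩ := QuotientGroup.mk_surjective q
    obtain ⟨w, hw, hσw⟩ := exists_mem_blockStabilizer_descentSet_mul_subset (S := S) σ
    exact ⟨⟨σ * w, hσw⟩, QuotientGroup.mk_mul_of_mem σ hw⟩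

lemma alpha_dvd_alpha (h : S ⊆ T) : alpha n S ∣ alpha n T := by
  rw [alpha_eq_index, alpha_eq_index]
  exact Subgroup.index_dvd_of_le (blockStabilizer_anti h)

lemma alpha_mul_prod_factorial :
    alpha n S * ∏ v ∈ univ.image (blockIndex n S), (#{i | blockIndex n S i = v})! = n ! := by
  have hcard : Nat.card (blockStabilizer n S) =
      ∏ v ∈ univ.image (blockIndex n S), (#{i | blockIndex n S i = v})! := by
    change Nat.card {w : Equiv.Perm (Fin n) // blockIndex n S ∘ w = blockIndex n S} = _
    rw [Nat.card_eq_fintype_card, DomMulAct.stabilizer_card']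
    simp only [Fintype.card_subtype]
  rw [alpha_eq_index, ← hcard, Subgroup.index_mul_card, Nat.card_perm, Nat.card_fin]

lemma alpha_eq_div :
    alpha n S = n ! / ∏ v ∈ univ.image (blockIndex n S), (#{i | blockIndex n S i = v})! :=
  Nat.eq_div_of_mul_eq_left (prod_pos fun _ _ => Nat.factorial_pos _).ne' alpha_mul_prod_factorial

lemma sum_beta_powerset : ∑ T ∈ S.powerset, beta n T = alpha n S := by
  rw [alpha, card_eq_sum_card_fiberwise fun π hπ => mem_powerset.2 (mem_filter.1 hπ).2]
  refine sum_congr rfl fun T hT => ?_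
  rw [beta, filter_filter]
  exact congrArg card (filter_congr fun π _ => ⟨fun h => ⟨h ▸ mem_powerset.1 hT, h⟩, fun h => h.2⟩)

lemma beta_eq_sum_alpha {R : Type*} [CommRing R] (n : ℕ) (S : Finset ℕ) :
    (beta n S : R) = ∑ T ∈ S.powerset, (-1) ^ #(S \ T) * (alpha n T : R) := by
  simp_rw [← sum_beta_powerset, Nat.cast_sum]
  exact (moebius_inversion_powerset (fun T => (beta n T : R)) S).symm

lemma beta_eq_neg_one_pow_mul_beta_of_alpha_eq_zero {R : Type*} [CommRing R] {P : Finset ℕ}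
    (hPS : P ⊆ S) (h : ∀ T ⊆ S, ¬T ⊆ P → (alpha n T : R) = 0) :
    (beta n S : R) = (-1) ^ #(S \ P) * beta n P := by
  rw [beta_eq_sum_alpha, beta_eq_sum_alpha, mul_sum, ← sum_subset (powerset_mono.2 hPS)]
  · refine sum_congr rfl fun T hT => ?_
    have hTP := mem_powerset.1 hT
    rw [← mul_assoc, ← pow_add, card_sdiff_of_subset hTP, card_sdiff_of_subset hPS,
      card_sdiff_of_subset (hTP.trans hPS)]
    have := card_le_card hTP
    have := card_le_card hPS
    congr 2
    omega
  · intro T hTS hTP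
    rw [h T (mem_powerset.1 hTS) (mt mem_powerset.2 hTP), mul_zero]

end Alpha

lemma three_dvd_alpha_eleven_singleton : ∀ m ∈ Icc 3 8, 3 ∣ alpha 11 {m} := by
  simp only [alpha_eq_div]
  decide

lemma beta_eleven_union_eq_neg_one_pow_mul {R P : Finset ℕ} (hR : R ⊆ Icc 3 8)
    (hP : P ⊆ {1, 2, 9, 10}) : (beta 11 (R ∪ P) : ZMod 3) = (-1) ^ #R * beta 11 P := by
  have hRP : Disjoint R P := disjoint_of_subset_left hR (disjoint_of_subset_right hP (by decide))
  rw [beta_eq_neg_one_pow_mul_beta_of_alpha_eq_zero subset_union_right,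
    union_sdiff_cancel_right hRP]
  intro T hT hTP
  obtain ⟨m, hmT, hmP⟩ := not_subset.1 hTP
  have hmR : m ∈ R := (mem_union.1 (hT hmT)).resolve_right hmP
  exact (ZMod.natCast_eq_zero_iff _ _).2 ((three_dvd_alpha_eleven_singleton m (hR hmR)).trans
    (alpha_dvd_alpha (singleton_subset_iff.2 hmT)))

lemma beta_eleven_pairs_mod_three :
    (beta 11 {1, 9} : ZMod 3) = 1 ∧ (beta 11 {2, 10} : ZMod 3) = 1 ∧
    (beta 11 {1, 10} : ZMod 3) = -1 ∧ (beta 11 {2, 9} : ZMod 3) = -1 := by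
  simp only [beta_eq_sum_alpha, alpha_eq_div]
  decide

/-- For any subset `R ⊆ {3,…,8}`, the descent set statistics of `𝔖₁₁` satisfy
`β₁₁(R ∪ {1,9}) ≡ β₁₁(R ∪ {2,10}) ≡ (-1)^{|R|} (mod 3)` and
`β₁₁(R ∪ {1,10}) ≡ β₁₁(R ∪ {2,9}) ≡ -(-1)^{|R|} (mod 3)`. -/
theorem beta_eleven_mod_three (R : Finset ℕ) (hR : R ⊆ Finset.Icc 3 8) :
    ((beta 11 (R ∪ {1, 9}) : ℤ) ≡ (-1) ^ R.card [ZMOD (3 : ℤ)]) ∧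
    ((beta 11 (R ∪ {2, 10}) : ℤ) ≡ (-1) ^ R.card [ZMOD (3 : ℤ)]) ∧
    ((beta 11 (R ∪ {1, 10}) : ℤ) ≡ -(-1) ^ R.card [ZMOD (3 : ℤ)]) ∧
    ((beta 11 (R ∪ {2, 9}) : ℤ) ≡ -(-1) ^ R.card [ZMOD (3 : ℤ)]) := by
  have hmod (P : Finset ℕ) (hP : P ⊆ {1, 2, 9, 10}) (z : ℤ) (hz : (beta 11 P : ZMod 3) = z) :
      (beta 11 (R ∪ P) : ℤ) ≡ (-1) ^ #R * z [ZMOD 3] := by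
    refine (ZMod.intCast_eq_intCast_iff _ _ 3).1 ?_
    push_cast
    rw [beta_eleven_union_eq_neg_one_pow_mul hR hP, hz]
  obtain ⟨h19, h210, h110, h29⟩ := beta_eleven_pairs_mod_three
  refine ⟨?_, ?_, ?_, ?_⟩
  · rw [← mul_one ((-1 : ℤ) ^ #R)]
    exact hmod {1, 9} (by decide) 1 (by rw [h19, Int.cast_one])
  · rw [← mul_one ((-1 : ℤ) ^ #R)]
    exact hmod {2, 10} (by decide) 1 (by rw [h210, Int.cast_one])
  · rw [← mul_neg_one ((-1 : ℤ) ^ #R)]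
    exact hmod {1, 10} (by decide) (-1) (by rw [h110, Int.cast_neg, Int.cast_one])
  · rw [← mul_neg_one ((-1 : ℤ) ^ #R)]
    exact hmod {2, 9} (by decide) (-1) (by rw [h29, Int.cast_neg, Int.cast_one])
end

section
/- Let n ≥ 1. If the cyclotomic polynomial Φ_2(t) = t + 1 divides the descent set polynomial Q_{2n}(t), then (t+1)^2 divides Q_{2n}(t); that is, Φ_2 is then a double factor of Q_{2n}(t). -/
open Finset Polynomial

lemma descentSet_subset (m : ℕ) (π : Equiv.Perm (Fin m)) : descentSet m π ⊆ Finset.Ico 1 m :=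
  Finset.filter_subset _ _

lemma mem_descentSet (m : ℕ) (π : Equiv.Perm (Fin m)) {k : ℕ} (h1 : 1 ≤ k) (hk : k < m) :
    k ∈ descentSet m π ↔ π ⟨k, hk⟩ < π ⟨k - 1, by omega⟩ := by
  constructor
  · intro h
    exact (Finset.mem_filter.mp h).2 hk
  · intro h
    exact Finset.mem_filter.mpr ⟨Finset.mem_Ico.mpr ⟨h1, hk⟩, fun _ => h⟩

lemma swap_val (m : ℕ) (a b x : Fin m) :
    ((Equiv.swap a b x : Fin m) : ℕ) =
      if (x : ℕ) = a then b else if (x : ℕ) = b then a else x := by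
  rw [Equiv.swap_apply_def]
  split_ifs <;> simp_all [Fin.ext_iff]

lemma swap_lt_iff {m : ℕ} {a b u v : Fin m} (hab : (b : ℕ) = (a : ℕ) + 1)
    (h : ¬((u = a ∨ u = b) ∧ (v = a ∨ v = b))) :
    Equiv.swap a b u < Equiv.swap a b v ↔ u < v := by
  rw [Fin.lt_def, Fin.lt_def, swap_val, swap_val]
  simp only [Fin.ext_iff] at h
  split_ifs <;> omega

lemma even_card_of_invol {α : Type*} [DecidableEq α] :
    ∀ (N : ℕ) (s : Finset α) (f : α → α), s.card ≤ N →
    (∀ x ∈ s, f x ∈ s) → (∀ x ∈ s, f (f x) = x) → (∀ x ∈ s, f x ≠ x) → Even s.card := by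
  intro N
  induction N with
  | zero =>
    intro s f h _ _ _
    simp [Finset.card_eq_zero.mp (Nat.le_zero.mp h)]
  | succ N ih =>
    intro s f hcard hmem hinv hne
    rcases s.eq_empty_or_nonempty with rfl | ⟨x, hx⟩
    · simp
    · have hfx : f x ∈ s := hmem x hx
      have hfxx : f x ≠ x := hne x hx
      set t := (s.erase x).erase (f x) with ht
      have hfx' : f x ∈ s.erase x := Finset.mem_erase.mpr ⟨hfxx, hfx⟩
      have hc1 : (s.erase x).card = s.card - 1 := Finset.card_erase_of_mem hx
      have hc2 : t.card = (s.erase x).card - 1 := Finset.card_erase_of_mem hfx'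
      have hsx : 1 ≤ s.card := Finset.card_pos.mpr ⟨x, hx⟩
      have hsx2 : 1 ≤ (s.erase x).card := Finset.card_pos.mpr ⟨f x, hfx'⟩
      have hmem' : ∀ y ∈ t, y ∈ s ∧ y ≠ x ∧ y ≠ f x := by
        intro y hy
        rw [ht, Finset.mem_erase, Finset.mem_erase] at hy
        exact ⟨hy.2.2, hy.2.1, hy.1⟩
      have htmem : ∀ y ∈ t, f y ∈ t := by
        intro y hy
        obtain ⟨hys, hyx, hyfx⟩ := hmem' y hy
        rw [ht, Finset.mem_erase, Finset.mem_erase]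
        refine ⟨?_, ?_, hmem y hys⟩
        · intro hc; exact hyx (by rw [← hinv y hys, hc, hinv x hx])
        · intro hc; exact hyfx (by rw [← hinv y hys, hc])
      have hteven : Even t.card := by
        refine ih t f (by omega) htmem ?_ ?_
        · intro y hy; exact hinv y (hmem' y hy).1
        · intro y hy; exact hne y (hmem' y hy).1
      have hst : s.card = t.card + 2 := by omega
      rw [hst]
      exact hteven.add (by decide)

section Pairs
variable {n : ℕ}

/-- value `2j` as an element of `Fin (2n)` -/
def pA (n : ℕ) (j : Fin n) : Fin (2 * n) := ⟨2 * j.val, by have := j.isLt; omega⟩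
/-- value `2j+1` -/
def pB (n : ℕ) (j : Fin n) : Fin (2 * n) := ⟨2 * j.val + 1, by have := j.isLt; omega⟩

/-- position of value 2j -/
def posA (π : Equiv.Perm (Fin (2 * n))) (j : Fin n) : ℕ := (π.symm (pA n j)).val
def posB (π : Equiv.Perm (Fin (2 * n))) (j : Fin n) : ℕ := (π.symm (pB n j)).val

/-- pair `j` is *good* (for cut `i`): its two values are at non-adjacent positions,
or they occupy positions `i-1, i` (0-indexed). -/
def isGood (i : ℕ) (π : Equiv.Perm (Fin (2 * n))) (j : Fin n) : Prop :=
  (posB π j ≠ posA π j + 1 ∧ posA π j ≠ posB π j + 1) ∨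
  (posA π j = i - 1 ∧ posB π j = i) ∨ (posB π j = i - 1 ∧ posA π j = i)

instance (i : ℕ) (π : Equiv.Perm (Fin (2 * n))) (j : Fin n) : Decidable (isGood i π j) := by
  unfold isGood; infer_instance

lemma posA_lt (π : Equiv.Perm (Fin (2 * n))) (j : Fin n) : posA π j < 2 * n := (π.symm _).isLt
lemma posB_lt (π : Equiv.Perm (Fin (2 * n))) (j : Fin n) : posB π j < 2 * n := (π.symm _).isLt

lemma exists_good {i : ℕ} (hi1 : 1 ≤ i) (him : i < 2 * n) (hio : Odd i)
    (π : Equiv.Perm (Fin (2 * n))) : ∃ j : Fin n, isGood i π j := by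
  by_contra hbad
  push_neg at hbad
  -- every pair occupies adjacent positions
  have hadj : ∀ j : Fin n, posB π j = posA π j + 1 ∨ posA π j = posB π j + 1 := by
    intro j
    have := hbad j
    unfold isGood at this
    tauto
  set L : Fin n → ℕ := fun j => min (posA π j) (posB π j) with hL
  -- the pair index of a position
  have hJex : ∀ x : Fin (2 * n), ∃ j : Fin n, x.val = L j ∨ x.val = L j + 1 := by
    intro x
    have hv : ((π x) : ℕ) < 2 * n := (π x).isLt
    refine ⟨⟨(π x).val / 2, by omega⟩, ?_⟩
    have hmod : (π x).val % 2 = 0 ∨ (π x).val % 2 = 1 := by omega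
    set j : Fin n := ⟨(π x).val / 2, by omega⟩ with hj
    rcases hmod with hm | hm
    · -- π x = pA n j, so x = π.symm (pA n j)
      have hπx : π x = pA n j := by
        apply Fin.ext; simp [pA, hj]; omega
      have hx : posA π j = x.val := by
        unfold posA; rw [← hπx, Equiv.symm_apply_apply]
      rcases hadj j with h | h
      · left; rw [hL]; simp only; omega
      · right; rw [hL]; simp only; omega
    · have hπx : π x = pB n j := by
        apply Fin.ext; simp [pB, hj]; omega
      have hx : posB π j = x.val := by
        unfold posB; rw [← hπx, Equiv.symm_apply_apply]
      rcases hadj j with h | h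
      · right; rw [hL]; simp only; omega
      · left; rw [hL]; simp only; omega
  -- uniqueness
  have hJuniq : ∀ (x : Fin (2 * n)) (j j' : Fin n),
      (x.val = L j ∨ x.val = L j + 1) → (x.val = L j' ∨ x.val = L j' + 1) → j = j' := by
    have key : ∀ (x : Fin (2 * n)) (j : Fin n),
        (x.val = L j ∨ x.val = L j + 1) → π x = pA n j ∨ π x = pB n j := by
      intro x j hx
      have h1 : x.val = posA π j ∨ x.val = posB π j := by
        rcases hadj j with h | h <;> rw [hL] at hx <;> simp only at hx <;> omega
      rcases h1 with h1 | h1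
      · left
        have : x = π.symm (pA n j) := Fin.ext h1
        rw [this, Equiv.apply_symm_apply]
      · right
        have : x = π.symm (pB n j) := Fin.ext h1
        rw [this, Equiv.apply_symm_apply]
    intro x j j' hj hj'
    have h1 := key x j hj
    have h2 := key x j' hj'
    apply Fin.ext
    rcases h1 with h1 | h1 <;> rcases h2 with h2 | h2 <;>
      · rw [h1] at h2
        simp [pA, pB, Fin.ext_iff] at h2
        omega
  -- each L j is even
  have hLeven : ∀ j : Fin n, Even (L j) := by
    intro j0
    set p := L j0 with hp
    have hpm : p < 2 * n := by
      rw [hp, hL]; simp only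
      have := posA_lt π j0; omega
    set T : Finset (Fin n) := univ.filter (fun j => L j < p) with hT
    have hset : Finset.range p = T.biUnion (fun j => {L j, L j + 1}) := by
      ext x
      simp only [Finset.mem_range, Finset.mem_biUnion, hT, Finset.mem_filter,
        Finset.mem_univ, true_and, Finset.mem_insert, Finset.mem_singleton]
      constructor
      · intro hx
        obtain ⟨j, hj⟩ := hJex ⟨x, by omega⟩
        have hj' : x = L j ∨ x = L j + 1 := hj
        refine ⟨j, by omega, by omega⟩
      · rintro ⟨j, hjp, hx⟩
        rcases hx with rfl | rfl
        · exact hjp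
        · -- L j + 1 < p, else p is covered twice
          rcases Nat.lt_or_ge (L j + 1) p with h | h
          · exact h
          · exfalso
            have hep : L j + 1 = p := by omega
            have h1 : j = j0 := hJuniq ⟨p, hpm⟩ j j0 (Or.inr hep.symm) (Or.inl hp)
            rw [h1] at hjp
            omega
    have hdisj : ∀ j ∈ T, ∀ j' ∈ T, j ≠ j' →
        Disjoint ({L j, L j + 1} : Finset ℕ) {L j', L j' + 1} := by
      intro j hj j' hj' hne
      rw [Finset.disjoint_left]
      intro x hx hx'
      simp only [Finset.mem_insert, Finset.mem_singleton] at hx hx'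
      rw [hT, Finset.mem_filter] at hj hj'
      have hxm : x < 2 * n := by
        have h1 : L j < p := hj.2
        have := hpm; omega
      exact hne (hJuniq ⟨x, hxm⟩ j j' (by simpa using hx) (by simpa using hx'))
    have hcard : p = 2 * T.card := by
      have h1 : (Finset.range p).card = p := Finset.card_range p
      rw [hset, Finset.card_biUnion hdisj] at h1
      have h2 : ∀ j ∈ T, ({L j, L j + 1} : Finset ℕ).card = 2 := by
        intro j _
        rw [Finset.card_insert_of_notMem (by simp), Finset.card_singleton]
      rw [Finset.sum_congr rfl h2, Finset.sum_const, smul_eq_mul] at h1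
      omega
    exact ⟨T.card, by omega⟩
  -- contradiction at position i-1
  obtain ⟨j, hj⟩ := hJex ⟨i - 1, by omega⟩
  simp only at hj
  obtain ⟨t, ht⟩ := hLeven j
  obtain ⟨u, hu⟩ := hio
  have hLj : L j = i - 1 := by omega
  have : isGood i π j := by
    unfold isGood
    rcases hadj j with h | h <;> rw [hL] at hLj <;> simp only at hLj
    · right; left; constructor <;> omega
    · right; right; constructor <;> omega
  exact hbad j this


lemma symm_swap_mul (π : Equiv.Perm (Fin (2 * n))) (a b v : Fin (2 * n)) :
    (Equiv.swap a b * π).symm v = π.symm (Equiv.swap a b v) := by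
  rw [Equiv.symm_apply_eq]
  show v = Equiv.swap a b (π (π.symm (Equiv.swap a b v)))
  rw [Equiv.apply_symm_apply, Equiv.swap_apply_self]

lemma good_swap (i : ℕ) (π : Equiv.Perm (Fin (2 * n))) (js j : Fin n) :
    isGood i (Equiv.swap (pA n js) (pB n js) * π) j ↔ isGood i π j := by
  by_cases hj : j = js
  · subst hj
    have h1 : posA (Equiv.swap (pA n j) (pB n j) * π) j = posB π j := by
      unfold posA posB; rw [symm_swap_mul, Equiv.swap_apply_left]
    have h2 : posB (Equiv.swap (pA n j) (pB n j) * π) j = posA π j := by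
      unfold posA posB; rw [symm_swap_mul, Equiv.swap_apply_right]
    unfold isGood; rw [h1, h2]; tauto
  · have hv : j.val ≠ js.val := fun h => hj (Fin.ext h)
    have e1 : pA n j ≠ pA n js := by simp [pA, Fin.ext_iff]; omega
    have e2 : pA n j ≠ pB n js := by simp [pA, pB, Fin.ext_iff]; omega
    have e3 : pB n j ≠ pA n js := by simp [pA, pB, Fin.ext_iff]; omega
    have e4 : pB n j ≠ pB n js := by simp [pB, Fin.ext_iff]; omega
    have h1 : posA (Equiv.swap (pA n js) (pB n js) * π) j = posA π j := by
      unfold posA; rw [symm_swap_mul, Equiv.swap_apply_of_ne_of_ne e1 e2]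
    have h2 : posB (Equiv.swap (pA n js) (pB n js) * π) j = posB π j := by
      unfold posB; rw [symm_swap_mul, Equiv.swap_apply_of_ne_of_ne e3 e4]
    unfold isGood; rw [h1, h2]

lemma descent_erase_eq {i : ℕ} (hi1 : 1 ≤ i) (π : Equiv.Perm (Fin (2 * n))) (j : Fin n)
    (hg : isGood i π j) (k : ℕ) (hki : k ≠ i) :
    (k ∈ descentSet (2 * n) (Equiv.swap (pA n j) (pB n j) * π) ↔ k ∈ descentSet (2 * n) π) := by
  have hab : ((pB n j : Fin (2 * n)) : ℕ) = ((pA n j : Fin (2 * n)) : ℕ) + 1 := rfl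
  by_cases hk : 1 ≤ k ∧ k < 2 * n
  · rw [mem_descentSet _ _ hk.1 hk.2, mem_descentSet _ _ hk.1 hk.2]
    have hσap : ∀ x : Fin (2 * n), (Equiv.swap (pA n j) (pB n j) * π) x
        = Equiv.swap (pA n j) (pB n j) (π x) := fun x => rfl
    rw [hσap, hσap]
    apply swap_lt_iff hab
    rintro ⟨h1, h2⟩
    have hk1 : k - 1 < 2 * n := by omega
    have hne : (⟨k, hk.2⟩ : Fin (2 * n)) ≠ ⟨k - 1, hk1⟩ := by
      simp [Fin.ext_iff]; omega
    have hposA : ∀ x : Fin (2 * n), π x = pA n j → posA π j = x.val := by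
      intro x h
      show (π.symm (pA n j)).val = x.val
      rw [← h, Equiv.symm_apply_apply]
    have hposB : ∀ x : Fin (2 * n), π x = pB n j → posB π j = x.val := by
      intro x h
      show (π.symm (pB n j)).val = x.val
      rw [← h, Equiv.symm_apply_apply]
    unfold isGood at hg
    rcases h1 with h1 | h1 <;> rcases h2 with h2 | h2
    · exact hne (π.injective (h1.trans h2.symm))
    · have p1 := hposA _ h1
      have p2 := hposB _ h2
      simp only [Fin.val_mk] at p1 p2
      rcases hg with ⟨hgg, _⟩ | ⟨hga, hgb⟩ | ⟨hga, hgb⟩ <;> omega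
    · have p1 := hposB _ h1
      have p2 := hposA _ h2
      simp only [Fin.val_mk] at p1 p2
      rcases hg with ⟨_, hgg⟩ | ⟨hga, hgb⟩ | ⟨hga, hgb⟩ <;> omega
    · exact hne (π.injective (h1.trans h2.symm))
  · constructor <;> intro hmem <;>
      exact absurd (Finset.mem_Ico.mp (descentSet_subset _ _ hmem)) (by omega)

lemma key0 {i : ℕ} (hi1 : 1 ≤ i) (him : i < 2 * n) (hio : Odd i) (S : Finset ℕ) (hiS : i ∉ S) :
    Even (beta (2 * n) S + beta (2 * n) (insert i S)) := by
  classical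
  set X := univ.filter
      (fun π : Equiv.Perm (Fin (2 * n)) => (descentSet (2 * n) π).erase i = S) with hX
  have hsplit : X.card = beta (2 * n) S + beta (2 * n) (insert i S) := by
    have hpred : ∀ π : Equiv.Perm (Fin (2 * n)),
        ((descentSet (2 * n) π).erase i = S) ↔
          (descentSet (2 * n) π = S ∨ descentSet (2 * n) π = insert i S) := by
      intro π
      constructor
      · intro h
        by_cases hi : i ∈ descentSet (2 * n) π
        · right; rw [← h, Finset.insert_erase hi]
        · left; rw [← h, Finset.erase_eq_of_notMem hi]
      · rintro (h | h) <;> rw [h]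
        · exact Finset.erase_eq_of_notMem hiS
        · exact Finset.erase_insert hiS
    have hXu : X = (univ.filter (fun π : Equiv.Perm (Fin (2 * n)) => descentSet (2 * n) π = S)) ∪
        (univ.filter (fun π : Equiv.Perm (Fin (2 * n)) => descentSet (2 * n) π = insert i S)) := by
      rw [hX, ← Finset.filter_or]
      exact Finset.filter_congr (fun π _ => by rw [hpred π])
    have hdisj : Disjoint
        (univ.filter (fun π : Equiv.Perm (Fin (2 * n)) => descentSet (2 * n) π = S))
        (univ.filter (fun π : Equiv.Perm (Fin (2 * n)) => descentSet (2 * n) π = insert i S)) := by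
      rw [Finset.disjoint_left]
      intro π hp1 hp2
      have e1 := (Finset.mem_filter.mp hp1).2
      have e2 := (Finset.mem_filter.mp hp2).2
      have hmem : i ∈ descentSet (2 * n) π := by
        rw [e2]; exact Finset.mem_insert_self i S
      rw [e1] at hmem
      exact hiS hmem
    rw [hXu, Finset.card_union_of_disjoint hdisj]
    rfl
  have hne : ∀ π : Equiv.Perm (Fin (2 * n)), (univ.filter (isGood i π)).Nonempty := by
    intro π
    obtain ⟨j, hj⟩ := exists_good hi1 him hio π
    exact ⟨j, Finset.mem_filter.mpr ⟨Finset.mem_univ _, hj⟩⟩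
  set jm : Equiv.Perm (Fin (2 * n)) → Fin n :=
    fun π => (univ.filter (isGood i π)).min' (hne π) with hjm
  set f : Equiv.Perm (Fin (2 * n)) → Equiv.Perm (Fin (2 * n)) :=
    fun π => Equiv.swap (pA n (jm π)) (pB n (jm π)) * π with hf
  have hgood : ∀ π, isGood i π (jm π) := by
    intro π
    have := Finset.min'_mem (univ.filter (isGood i π)) (hne π)
    exact (Finset.mem_filter.mp this).2
  have hstab : ∀ π, jm (f π) = jm π := by
    intro π
    have hset : univ.filter (isGood i (f π)) = univ.filter (isGood i π) := by
      apply Finset.filter_congr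
      intro j _
      rw [hf]
      simp only
      rw [good_swap]
    rw [hjm]
    simp only
    congr 1
  have hmaps : ∀ π ∈ X, f π ∈ X := by
    intro π hπ
    rw [hX, Finset.mem_filter] at hπ ⊢
    refine ⟨Finset.mem_univ _, ?_⟩
    rw [← hπ.2]
    ext k
    simp only [Finset.mem_erase]
    exact and_congr_right fun hk => descent_erase_eq hi1 π (jm π) (hgood π) k hk
  have hinvol : ∀ π ∈ X, f (f π) = π := by
    intro π _
    rw [hf]
    simp only
    rw [hstab π, ← mul_assoc, Equiv.swap_mul_self, one_mul]
  have hnefix : ∀ π ∈ X, f π ≠ π := by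
    intro π _ heq
    have := congrArg (fun σ : Equiv.Perm (Fin (2 * n)) => σ (π.symm (pA n (jm π)))) heq
    simp only [hf] at this
    rw [Equiv.Perm.mul_apply, Equiv.apply_symm_apply, Equiv.swap_apply_left] at this
    have : ((pB n (jm π)) : ℕ) = ((pA n (jm π)) : ℕ) := congrArg Fin.val this
    simp [pA, pB] at this
  rw [← hsplit]
  exact even_card_of_invol X.card X f le_rfl hmaps hinvol hnefix

end Pairs

/-- reduce β-parity to the even part of S -/
lemma parity_red (n : ℕ) : ∀ S : Finset ℕ, S ⊆ Finset.Ico 1 (2 * n) →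
    ((-1 : ℤ)) ^ (beta (2 * n) S) = (-1) ^ (beta (2 * n) (S.filter (fun x => x % 2 = 0))) := by
  intro S
  induction S using Finset.strongInduction with
  | _ S ih =>
    intro hS
    by_cases hall : ∀ x ∈ S, x % 2 = 0
    · rw [Finset.filter_eq_self.mpr hall]
    · push_neg at hall
      obtain ⟨i, hiS, hio⟩ := hall
      have hi1 : 1 ≤ i := (Finset.mem_Ico.mp (hS hiS)).1
      have him : i < 2 * n := (Finset.mem_Ico.mp (hS hiS)).2
      have hodd : Odd i := Nat.odd_iff.mpr (by omega)
      have hkey := key0 hi1 him hodd (S.erase i) (Finset.notMem_erase i S)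
      rw [Finset.insert_erase hiS] at hkey
      have hswap : ((-1 : ℤ)) ^ (beta (2 * n) S) = (-1) ^ (beta (2 * n) (S.erase i)) := by
        rcases Nat.even_or_odd (beta (2 * n) (S.erase i)) with he | ho
        · have hev : Even (beta (2 * n) S) := by
            rcases hkey with ⟨t, ht⟩; rcases he with ⟨u, hu⟩; exact ⟨t - u, by omega⟩
          rw [Even.neg_one_pow hev, Even.neg_one_pow he]
        · have hod : Odd (beta (2 * n) S) := by
            rcases hkey with ⟨t, ht⟩; rcases ho with ⟨u, hu⟩; exact ⟨t - u - 1, by omega⟩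
          rw [Odd.neg_one_pow hod, Odd.neg_one_pow ho]
      have hfil : (S.erase i).filter (fun x => x % 2 = 0) = S.filter (fun x => x % 2 = 0) := by
        ext a
        simp only [Finset.mem_filter, Finset.mem_erase]
        constructor
        · rintro ⟨⟨_, ha⟩, hp⟩; exact ⟨ha, hp⟩
        · rintro ⟨ha, hp⟩
          exact ⟨⟨fun h => by subst h; omega, ha⟩, hp⟩
      rw [hswap, ih (S.erase i) (Finset.erase_ssubset hiS)
        (subset_trans (Finset.erase_subset i S) hS), hfil]

section PosSwap
variable {n : ℕ}

lemma pos_swap_other (e : ℕ) (he1 : 1 ≤ e) (hem : e < 2 * n) (π : Equiv.Perm (Fin (2 * n)))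
    (k : ℕ) (h1 : k ≠ e - 1) (h2 : k ≠ e) (h3 : k ≠ e + 1) :
    (k ∈ descentSet (2 * n) (π * Equiv.swap (⟨e - 1, by omega⟩ : Fin (2 * n)) ⟨e, hem⟩) ↔
      k ∈ descentSet (2 * n) π) := by
  by_cases hk : 1 ≤ k ∧ k < 2 * n
  · rw [mem_descentSet _ _ hk.1 hk.2, mem_descentSet _ _ hk.1 hk.2]
    have e1 : (⟨k, hk.2⟩ : Fin (2 * n)) ≠ ⟨e - 1, by omega⟩ := by simp [Fin.ext_iff]; omega
    have e2 : (⟨k, hk.2⟩ : Fin (2 * n)) ≠ ⟨e, hem⟩ := by simp [Fin.ext_iff]; omega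
    have e3 : (⟨k - 1, by omega⟩ : Fin (2 * n)) ≠ ⟨e - 1, by omega⟩ := by
      simp [Fin.ext_iff]; omega
    have e4 : (⟨k - 1, by omega⟩ : Fin (2 * n)) ≠ ⟨e, hem⟩ := by simp [Fin.ext_iff]; omega
    rw [show (π * Equiv.swap (⟨e - 1, by omega⟩ : Fin (2 * n)) ⟨e, hem⟩) ⟨k, hk.2⟩
        = π (Equiv.swap (⟨e - 1, by omega⟩ : Fin (2 * n)) ⟨e, hem⟩ ⟨k, hk.2⟩) from rfl]
    rw [show (π * Equiv.swap (⟨e - 1, by omega⟩ : Fin (2 * n)) ⟨e, hem⟩) ⟨k - 1, by omega⟩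
        = π (Equiv.swap (⟨e - 1, by omega⟩ : Fin (2 * n)) ⟨e, hem⟩ ⟨k - 1, by omega⟩) from rfl]
    rw [Equiv.swap_apply_of_ne_of_ne e1 e2, Equiv.swap_apply_of_ne_of_ne e3 e4]
  · constructor <;> intro hmem <;>
      exact absurd (Finset.mem_Ico.mp (descentSet_subset _ _ hmem)) (by omega)

lemma pos_swap_toggle (e : ℕ) (he1 : 1 ≤ e) (hem : e < 2 * n) (π : Equiv.Perm (Fin (2 * n))) :
    (e ∈ descentSet (2 * n) (π * Equiv.swap (⟨e - 1, by omega⟩ : Fin (2 * n)) ⟨e, hem⟩) ↔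
      ¬(e ∈ descentSet (2 * n) π)) := by
  rw [mem_descentSet _ _ he1 hem, mem_descentSet _ _ he1 hem]
  rw [show (π * Equiv.swap (⟨e - 1, by omega⟩ : Fin (2 * n)) ⟨e, hem⟩) ⟨e, hem⟩
      = π (Equiv.swap (⟨e - 1, by omega⟩ : Fin (2 * n)) ⟨e, hem⟩ ⟨e, hem⟩) from rfl]
  rw [show (π * Equiv.swap (⟨e - 1, by omega⟩ : Fin (2 * n)) ⟨e, hem⟩) ⟨e - 1, by omega⟩
      = π (Equiv.swap (⟨e - 1, by omega⟩ : Fin (2 * n)) ⟨e, hem⟩ ⟨e - 1, by omega⟩) from rfl]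
  rw [Equiv.swap_apply_right, Equiv.swap_apply_left]
  have hne : π ⟨e, hem⟩ ≠ π ⟨e - 1, by omega⟩ := by
    intro h
    have := π.injective h
    simp [Fin.ext_iff] at this
    omega
  have hv : (π ⟨e, hem⟩ : ℕ) ≠ (π ⟨e - 1, by omega⟩ : ℕ) := fun h => hne (Fin.ext h)
  rw [Fin.lt_def, Fin.lt_def]
  omega

/-- number of permutations whose even part of the descent set is `E` -/
def Mcl (n : ℕ) (E : Finset ℕ) : ℕ :=
  (Finset.univ.filter (fun π : Equiv.Perm (Fin (2 * n)) =>
    (descentSet (2 * n) π).filter (fun x => x % 2 = 0) = E)).card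

lemma class_toggle (e : ℕ) (he1 : 1 ≤ e) (hem : e < 2 * n) (hee : e % 2 = 0)
    (π : Equiv.Perm (Fin (2 * n))) :
    (descentSet (2 * n) (π * Equiv.swap (⟨e - 1, by omega⟩ : Fin (2 * n)) ⟨e, hem⟩)).filter
        (fun x => x % 2 = 0) =
      (if e ∈ (descentSet (2 * n) π).filter (fun x => x % 2 = 0) then
        ((descentSet (2 * n) π).filter (fun x => x % 2 = 0)).erase e
      else insert e ((descentSet (2 * n) π).filter (fun x => x % 2 = 0))) := by
  ext k
  by_cases hp : k % 2 = 0
  · by_cases hke : k = e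
    · subst hke
      by_cases hkd : k ∈ descentSet (2 * n) π
      · have hmm : k ∈ (descentSet (2 * n) π).filter (fun x : ℕ => x % 2 = 0) :=
          Finset.mem_filter.mpr ⟨hkd, hp⟩
        rw [if_pos hmm]
        apply iff_of_false
        · intro hc
          exact ((pos_swap_toggle k he1 hem π).mp (Finset.mem_filter.mp hc).1) hkd
        · intro hc
          exact (Finset.mem_erase.mp hc).1 rfl
      · rw [if_neg (fun hc => hkd (Finset.mem_filter.mp hc).1)]
        apply iff_of_true
        · exact Finset.mem_filter.mpr ⟨(pos_swap_toggle k he1 hem π).mpr hkd, hp⟩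
        · exact Finset.mem_insert_self _ _
    · have hother := pos_swap_other e he1 hem π k (by omega) hke (by omega)
      have hmain : k ∈ (descentSet (2 * n)
            (π * Equiv.swap (⟨e - 1, by omega⟩ : Fin (2 * n)) ⟨e, hem⟩)).filter
              (fun x => x % 2 = 0) ↔
          k ∈ (descentSet (2 * n) π).filter (fun x => x % 2 = 0) := by
        rw [Finset.mem_filter, Finset.mem_filter, hother]
      rw [hmain]
      split_ifs with hmem
      · rw [Finset.mem_erase]; simp [hke]
      · rw [Finset.mem_insert]; simp [hke]
  · apply iff_of_false
    · exact fun hc => hp (Finset.mem_filter.mp hc).2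
    · split_ifs with hmem
      · intro hc
        exact hp (Finset.mem_filter.mp (Finset.mem_erase.mp hc).2).2
      · intro hc
        rcases Finset.mem_insert.mp hc with rfl | hc2
        · exact hp hee
        · exact hp (Finset.mem_filter.mp hc2).2

lemma toggle_card (e : ℕ) (he1 : 1 ≤ e) (hem : e < 2 * n) (hee : e % 2 = 0) (E : Finset ℕ)
    (heE : e ∉ E) : Mcl n (insert e E) = Mcl n E := by
  unfold Mcl
  have hss : ∀ π : Equiv.Perm (Fin (2 * n)),
      π * Equiv.swap (⟨e - 1, by omega⟩ : Fin (2 * n)) ⟨e, hem⟩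
        * Equiv.swap (⟨e - 1, by omega⟩ : Fin (2 * n)) ⟨e, hem⟩ = π := by
    intro π
    rw [mul_assoc, Equiv.swap_mul_self, mul_one]
  apply Finset.card_bij'
    (fun π _ => π * Equiv.swap (⟨e - 1, by omega⟩ : Fin (2 * n)) ⟨e, hem⟩)
    (fun π _ => π * Equiv.swap (⟨e - 1, by omega⟩ : Fin (2 * n)) ⟨e, hem⟩)
  case hi =>
    intro π hπ
    rw [Finset.mem_filter] at hπ ⊢
    refine ⟨Finset.mem_univ _, ?_⟩
    rw [class_toggle e he1 hem hee π, hπ.2,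
      if_pos (Finset.mem_insert_self e E), Finset.erase_insert heE]
  case hj =>
    intro π hπ
    rw [Finset.mem_filter] at hπ ⊢
    refine ⟨Finset.mem_univ _, ?_⟩
    rw [class_toggle e he1 hem hee π, hπ.2, if_neg heE]
  case left_inv => intro π _; exact hss π
  case right_inv => intro π _; exact hss π

lemma Mconst (n : ℕ) : ∀ E : Finset ℕ,
    E ⊆ (Finset.Ico 1 (2 * n)).filter (fun x => x % 2 = 0) → Mcl n E = Mcl n ∅ := by
  intro E
  induction E using Finset.strongInduction with
  | _ E ih =>
    intro hE
    rcases E.eq_empty_or_nonempty with rfl | ⟨e, he⟩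
    · rfl
    · have hmem := hE he
      rw [Finset.mem_filter, Finset.mem_Ico] at hmem
      have h1 : Mcl n E = Mcl n (E.erase e) := by
        have h2 := toggle_card e hmem.1.1 hmem.1.2 hmem.2 (E.erase e) (Finset.notMem_erase e E)
        rw [Finset.insert_erase he] at h2
        exact h2
      rw [h1]
      exact ih (E.erase e) (Finset.erase_ssubset he)
        (subset_trans (Finset.erase_subset _ _) hE)

end PosSwap

/-- the common signed sum over even subsets -/
noncomputable def csum (n : ℕ) : ℤ :=
  ∑ E ∈ ((Finset.Ico 1 (2 * n)).filter (fun x => x % 2 = 0)).powerset,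
    (-1 : ℤ) ^ (beta (2 * n) E)

lemma fiber_card (n : ℕ) (E : Finset ℕ)
    (hE : E ⊆ (Finset.Ico 1 (2 * n)).filter (fun x => x % 2 = 0)) :
    (((Finset.Ico 1 (2 * n)).powerset).filter
        (fun S => S.filter (fun x => x % 2 = 0) = E)).card
      = 2 ^ ((Finset.Ico 1 (2 * n)).filter (fun x => ¬ x % 2 = 0)).card := by
  rw [← Finset.card_powerset]
  apply Finset.card_bij' (fun S _ => S.filter (fun x => ¬ x % 2 = 0)) (fun O _ => E ∪ O)
  case hi =>
    intro S hS
    rw [Finset.mem_filter, Finset.mem_powerset] at hS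
    rw [Finset.mem_powerset]
    intro x hx
    rw [Finset.mem_filter] at hx ⊢
    exact ⟨hS.1 hx.1, hx.2⟩
  case hj =>
    intro O hO
    rw [Finset.mem_powerset] at hO
    rw [Finset.mem_filter, Finset.mem_powerset]
    constructor
    · intro x hx
      rcases Finset.mem_union.mp hx with h | h
      · exact Finset.mem_of_mem_filter x (hE h)
      · exact Finset.mem_of_mem_filter x (hO h)
    · ext x
      rw [Finset.mem_filter, Finset.mem_union]
      constructor
      · rintro ⟨h | h, hp⟩
        · exact h
        · exact absurd hp (Finset.mem_filter.mp (hO h)).2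
      · intro h
        exact ⟨Or.inl h, (Finset.mem_filter.mp (hE h)).2⟩
  case left_inv =>
    intro S hS
    rw [Finset.mem_filter, Finset.mem_powerset] at hS
    ext x
    rw [Finset.mem_union, Finset.mem_filter]
    constructor
    · rintro (h | h)
      · rw [← hS.2] at h
        exact (Finset.mem_filter.mp h).1
      · exact h.1
    · intro h
      by_cases hp : x % 2 = 0
      · left; rw [← hS.2]; exact Finset.mem_filter.mpr ⟨h, hp⟩
      · right; exact ⟨h, hp⟩
  case right_inv =>
    intro O hO
    rw [Finset.mem_powerset] at hO
    ext x
    rw [Finset.mem_filter, Finset.mem_union]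
    constructor
    · rintro ⟨h | h, hp⟩
      · exact absurd (Finset.mem_filter.mp (hE h)).2 hp
      · exact h
    · intro h
      exact ⟨Or.inr h, (Finset.mem_filter.mp (hO h)).2⟩

lemma evalQ (n : ℕ) :
    (Q (2 * n)).eval (-1) =
      (2 : ℤ) ^ ((Finset.Ico 1 (2 * n)).filter (fun x => ¬ x % 2 = 0)).card * csum n := by
  rw [Q, Polynomial.eval_finset_sum]
  simp only [Polynomial.eval_pow, Polynomial.eval_X]
  have h1 : ∑ S ∈ (Finset.Ico 1 (2 * n)).powerset, (-1 : ℤ) ^ beta (2 * n) S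
      = ∑ S ∈ (Finset.Ico 1 (2 * n)).powerset,
          (-1 : ℤ) ^ beta (2 * n) (S.filter (fun x => x % 2 = 0)) :=
    Finset.sum_congr rfl (fun S hS => parity_red n S (Finset.mem_powerset.mp hS))
  rw [h1]
  have hmaps : ∀ S ∈ (Finset.Ico 1 (2 * n)).powerset,
      S.filter (fun x => x % 2 = 0) ∈
        ((Finset.Ico 1 (2 * n)).filter (fun x => x % 2 = 0)).powerset := by
    intro S hS
    rw [Finset.mem_powerset] at hS ⊢
    intro x hx
    rw [Finset.mem_filter] at hx ⊢
    exact ⟨hS hx.1, hx.2⟩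
  rw [← Finset.sum_fiberwise_of_maps_to hmaps
    (fun S => (-1 : ℤ) ^ beta (2 * n) (S.filter (fun x => x % 2 = 0)))]
  have h2 : ∀ E ∈ ((Finset.Ico 1 (2 * n)).filter (fun x => x % 2 = 0)).powerset,
      (∑ S ∈ (Finset.Ico 1 (2 * n)).powerset.filter
          (fun S => S.filter (fun x => x % 2 = 0) = E),
        (-1 : ℤ) ^ beta (2 * n) (S.filter (fun x => x % 2 = 0)))
      = (2 : ℤ) ^ ((Finset.Ico 1 (2 * n)).filter (fun x => ¬ x % 2 = 0)).card
          * (-1 : ℤ) ^ beta (2 * n) E := by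
    intro E hE
    have h3 : ∀ S ∈ (Finset.Ico 1 (2 * n)).powerset.filter
        (fun S => S.filter (fun x => x % 2 = 0) = E),
        (-1 : ℤ) ^ beta (2 * n) (S.filter (fun x => x % 2 = 0)) = (-1 : ℤ) ^ beta (2 * n) E := by
      intro S hS
      rw [(Finset.mem_filter.mp hS).2]
    rw [Finset.sum_congr rfl h3, Finset.sum_const,
      fiber_card n E (Finset.mem_powerset.mp hE), nsmul_eq_mul]
    push_cast
    ring
  rw [Finset.sum_congr rfl h2, csum, Finset.mul_sum]

lemma evalQ' (n : ℕ) :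
    (Polynomial.derivative (Q (2 * n))).eval (-1) = -(Mcl n ∅ : ℤ) * csum n := by
  rw [Q, map_sum, Polynomial.eval_finset_sum]
  simp only [Polynomial.derivative_X_pow, Polynomial.eval_mul, Polynomial.eval_pow,
    Polynomial.eval_X, Polynomial.eval_C]
  have h1 : ∀ S ∈ (Finset.Ico 1 (2 * n)).powerset,
      ((beta (2 * n) S : ℤ)) * (-1 : ℤ) ^ (beta (2 * n) S - 1)
        = -((beta (2 * n) S : ℤ) * (-1 : ℤ) ^ (beta (2 * n) S)) := by
    intro S _
    by_cases h0 : beta (2 * n) S = 0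
    · rw [h0]; simp
    · have hb : beta (2 * n) S - 1 + 1 = beta (2 * n) S := by omega
      have hpow : (-1 : ℤ) ^ (beta (2 * n) S) = -(-1 : ℤ) ^ (beta (2 * n) S - 1) := by
        conv_lhs => rw [← hb]
        rw [pow_succ]
        ring
      rw [hpow]
      ring
  rw [Finset.sum_congr rfl h1, Finset.sum_neg_distrib, neg_mul]
  congr 1
  -- ∑_S β S * (-1)^{β S} = ∑_π (-1)^{β (Des π)}
  have hmaps : ∀ π : Equiv.Perm (Fin (2 * n)), π ∈ Finset.univ →
      descentSet (2 * n) π ∈ (Finset.Ico 1 (2 * n)).powerset :=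
    fun π _ => Finset.mem_powerset.mpr (descentSet_subset _ π)
  have hfib := Finset.sum_fiberwise_of_maps_to hmaps
    (fun π => (-1 : ℤ) ^ beta (2 * n) (descentSet (2 * n) π))
  have h2 : ∀ S ∈ (Finset.Ico 1 (2 * n)).powerset,
      (∑ π ∈ Finset.univ.filter
          (fun π : Equiv.Perm (Fin (2 * n)) => descentSet (2 * n) π = S),
        (-1 : ℤ) ^ beta (2 * n) (descentSet (2 * n) π))
      = (beta (2 * n) S : ℤ) * (-1 : ℤ) ^ (beta (2 * n) S) := by
    intro S _
    have h3 : ∀ π ∈ Finset.univ.filter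
        (fun π : Equiv.Perm (Fin (2 * n)) => descentSet (2 * n) π = S),
        (-1 : ℤ) ^ beta (2 * n) (descentSet (2 * n) π) = (-1 : ℤ) ^ beta (2 * n) S := by
      intro π hπ
      rw [(Finset.mem_filter.mp hπ).2]
    rw [Finset.sum_congr rfl h3, Finset.sum_const, nsmul_eq_mul]
    rfl
  rw [Finset.sum_congr rfl h2] at hfib
  rw [hfib]
  -- now reduce each π-term to the even part and fiber again
  have h4 : ∀ π : Equiv.Perm (Fin (2 * n)), π ∈ Finset.univ →
      (-1 : ℤ) ^ beta (2 * n) (descentSet (2 * n) π)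
        = (-1 : ℤ) ^ beta (2 * n) ((descentSet (2 * n) π).filter (fun x => x % 2 = 0)) :=
    fun π _ => parity_red n _ (descentSet_subset _ π)
  rw [Finset.sum_congr rfl h4]
  have hmaps2 : ∀ π : Equiv.Perm (Fin (2 * n)), π ∈ Finset.univ →
      (descentSet (2 * n) π).filter (fun x => x % 2 = 0) ∈
        ((Finset.Ico 1 (2 * n)).filter (fun x => x % 2 = 0)).powerset := by
    intro π _
    rw [Finset.mem_powerset]
    intro x hx
    rw [Finset.mem_filter] at hx ⊢
    exact ⟨descentSet_subset _ π hx.1, hx.2⟩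
  rw [← Finset.sum_fiberwise_of_maps_to hmaps2
    (fun π => (-1 : ℤ) ^ beta (2 * n) ((descentSet (2 * n) π).filter (fun x => x % 2 = 0)))]
  have h5 : ∀ E ∈ ((Finset.Ico 1 (2 * n)).filter (fun x => x % 2 = 0)).powerset,
      (∑ π ∈ Finset.univ.filter (fun π : Equiv.Perm (Fin (2 * n)) =>
          (descentSet (2 * n) π).filter (fun x => x % 2 = 0) = E),
        (-1 : ℤ) ^ beta (2 * n) ((descentSet (2 * n) π).filter (fun x => x % 2 = 0)))
      = (Mcl n ∅ : ℤ) * (-1 : ℤ) ^ (beta (2 * n) E) := by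
    intro E hE
    have h6 : ∀ π ∈ Finset.univ.filter (fun π : Equiv.Perm (Fin (2 * n)) =>
        (descentSet (2 * n) π).filter (fun x => x % 2 = 0) = E),
        (-1 : ℤ) ^ beta (2 * n) ((descentSet (2 * n) π).filter (fun x => x % 2 = 0))
          = (-1 : ℤ) ^ beta (2 * n) E := by
      intro π hπ
      rw [(Finset.mem_filter.mp hπ).2]
    rw [Finset.sum_congr rfl h6, Finset.sum_const, nsmul_eq_mul]
    have : (Finset.univ.filter (fun π : Equiv.Perm (Fin (2 * n)) =>
        (descentSet (2 * n) π).filter (fun x => x % 2 = 0) = E)).card = Mcl n E := rfl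
    rw [this, Mconst n E (Finset.mem_powerset.mp hE)]
  rw [Finset.sum_congr rfl h5, csum, Finset.mul_sum]

/-- If `Φ₂(t) = t + 1` divides `Q_{2n}(t)`, then it is a double factor:
`(t+1)²` divides `Q_{2n}(t)`. -/
theorem cyclotomic_two_sq_dvd (n : ℕ) (hn : 1 ≤ n)
    (h : Polynomial.cyclotomic 2 ℤ ∣ Q (2 * n)) :
    Polynomial.cyclotomic 2 ℤ ^ 2 ∣ Q (2 * n) := by
  rw [Polynomial.cyclotomic_two] at h ⊢
  have hXC : (Polynomial.X + 1 : Polynomial ℤ) = Polynomial.X - Polynomial.C (-1) := by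
    rw [map_neg, map_one, sub_neg_eq_add]
  obtain ⟨R, hR⟩ := h
  have hQe : (Q (2 * n)).eval (-1) = 0 := by
    rw [hR]
    simp
  have hc : csum n = 0 := by
    have heq := evalQ n
    rw [hQe] at heq
    have h2 : ((2 : ℤ)) ^ ((Finset.Ico 1 (2 * n)).filter (fun x => ¬ x % 2 = 0)).card ≠ 0 :=
      pow_ne_zero _ two_ne_zero
    exact (mul_eq_zero.mp heq.symm).resolve_left h2
  have hQ'e : (Polynomial.derivative (Q (2 * n))).eval (-1) = 0 := by
    rw [evalQ' n, hc, mul_zero]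
  have hd := congrArg Polynomial.derivative hR
  rw [Polynomial.derivative_mul] at hd
  have hder : Polynomial.derivative (Polynomial.X + 1 : Polynomial ℤ) = 1 := by
    simp
  rw [hder, one_mul] at hd
  have heval := congrArg (Polynomial.eval (-1 : ℤ)) hd
  rw [hQ'e, Polynomial.eval_add, Polynomial.eval_mul] at heval
  simp only [Polynomial.eval_add, Polynomial.eval_X, Polynomial.eval_one] at heval
  have hRe : R.eval (-1) = 0 := by
    have : (-1 : ℤ) + 1 = 0 := by ring
    rw [this, zero_mul, add_zero] at heval
    exact heval.symm
  have hdvd : (Polynomial.X + 1 : Polynomial ℤ) ∣ R := by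
    rw [hXC]
    exact Polynomial.dvd_iff_isRoot.mpr hRe
  obtain ⟨R2, hR2⟩ := hdvd
  exact ⟨R2, by rw [hR, hR2]; ring⟩
end
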